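/- arXiv:2512.16186 — 6 statements merged into one kernel-verified Lean document; each statement's English description precedes it below -/
import Mathlib

section
/- For every integer q ≥ 2 and every word w of length k ≥ 9 over an alphabet of q letters, the recurrence polynomial P_w(x) = 1 + (x − q)·A_w(x), viewed as a polynomial over ℂ of degree k, has exactly one root of absolute value ≥ 1.65; this root is real, simple, and lies in the open interval (q − q^{-(k-2)}, q), and the remaining k − 1 roots (counted with multiplicity) all have absolute value strictly less than 1.65. -/
/-- The `i`-th autocorrelation bit `b_i` of a word `w` (for `1 ≤ i ≤ w.length`):
`1` if the prefix of `w` of length `i` equals the suffix of `w` of length `i`, else `0`. -/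
def acorrBit {α : Type*} [DecidableEq α] (w : List α) (i : ℕ) : ℕ :=
  if w.take i = w.drop (w.length - i) then 1 else 0

/-- The inverse autocorrelation polynomial `A_w(x) = ∑_{i=1}^k b_i x^(i-1)`, over `ℝ`. -/
noncomputable def APolyR {α : Type*} [DecidableEq α] (w : List α) : Polynomial ℝ :=
  ∑ i ∈ Finset.range w.length, Polynomial.C (acorrBit w (i + 1) : ℝ) * Polynomial.X ^ i

/-- The inverse autocorrelation polynomial `A_w(x)`, over `ℂ`. -/
noncomputable def APolyC {α : Type*} [DecidableEq α] (w : List α) : Polynomial ℂ :=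
  ∑ i ∈ Finset.range w.length, Polynomial.C (acorrBit w (i + 1) : ℂ) * Polynomial.X ^ i

/-- The recurrence polynomial `P_w(x) = 1 + (x - q)·A_w(x)`, over `ℝ`. -/
noncomputable def PPolyR (q : ℕ) {α : Type*} [DecidableEq α] (w : List α) : Polynomial ℝ :=
  1 + (Polynomial.X - Polynomial.C (q : ℝ)) * APolyR w

/-- The recurrence polynomial `P_w(x) = 1 + (x - q)·A_w(x)`, over `ℂ`. -/
noncomputable def PPolyC (q : ℕ) {α : Type*} [DecidableEq α] (w : List α) : Polynomial ℂ :=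
  1 + (Polynomial.X - Polynomial.C (q : ℂ)) * APolyC w

/-- `h_w(n)`: the number of words of length `n` over `Fin q` whose last `w.length` letters
equal `w` and which contain no other occurrence of `w` as consecutive letters. -/
noncomputable def hitCount (q : ℕ) (w : List (Fin q)) (n : ℕ) : ℕ :=
  Nat.card {l : List (Fin q) // l.length = n ∧ l.drop (n - w.length) = w ∧
    ∀ p < n - w.length, (l.drop p).take w.length ≠ w}

/-- The first hitting probability `P_h(w,n) = h_w(n+k)/q^(n+k)` where `k = w.length`. -/
noncomputable def hitProb (q : ℕ) (w : List (Fin q)) (n : ℕ) : ℝ :=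
  (hitCount q w (n + w.length) : ℝ) / (q : ℝ) ^ (n + w.length)

/-- The constant `C_{w/w'} = ln(1+r)/r` with `r = (A_w(q) − A_{w'}(q))/A_{w'}(q)`. -/
noncomputable def Crat (q : ℕ) (w w' : List (Fin q)) : ℝ :=
  Real.log (1 + ((APolyR w).eval (q : ℝ) - (APolyR w').eval (q : ℝ)) / (APolyR w').eval (q : ℝ)) /
    (((APolyR w).eval (q : ℝ) - (APolyR w').eval (q : ℝ)) / (APolyR w').eval (q : ℝ))

/-- The partial-fraction coefficient `c_w = 1/P_w'(α_m)`. -/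
noncomputable def cwCoef (q : ℕ) (w : List (Fin q)) (αm : ℝ) : ℝ :=
  1 / ((PPolyR q w).derivative.eval αm)

/-!
The coefficient of `t ^ j` in `B(t) = t ^ (k - 1) * A_w(1 / t)` is `1` exactly when `j` is a period
of `w`. By the Fine–Wilf theorem the periods below `k - p` are the multiples of the least period `p`,
so `B` is a geometric series in `t ^ p` up to a tail of order `max p (k - p + 1)`, which gives
`|B(t)| ≥ 0.48` for `|t| ≤ 1 / 1.65`. Hence a root `z` of `P_w` with `|z| ≥ 1.65` satisfies
`|z - q| = 1 / |A_w(z)| ≤ 0.038`. On that disc `|A_w| ≥ X = 0.48 (q - 0.038) ^ (k - 1)` and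
`|A_w'| ≤ M` with `M < X ^ 2`, so `z ↦ q - 1 / A_w(z)`, whose fixed points are these roots, is a
contraction: the disc holds at most one root, and it is simple. A real root exists by the
intermediate value theorem, since `P_w(q) = 1` and `P_w(q - q ^ (2 - k)) < 0`.
-/

open Finset Polynomial

namespace List

variable {α : Type*} {w : List α}

theorem hasPeriod_iff_take_eq_drop {p : ℕ} :
    w.HasPeriod p ↔ w.take (w.length - p) = w.drop p := by
  have : w.HasPeriod p ↔ w.drop p <+: w := by
    rw [← prefix_append_right_inj (w.take p), take_append_drop]; rfl
  rw [this, prefix_iff_eq_take, length_drop, eq_comm]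

theorem HasPeriod.of_dvd {p j : ℕ} (hp : w.HasPeriod p) (hpj : p ∣ j) : w.HasPeriod j := by
  rw [hasPeriod_iff_forall_getElem?_mod] at hp ⊢
  intro i hi
  rw [hp i hi, hp (i % j) ((Nat.mod_le i j).trans_lt hi), Nat.mod_mod_of_dvd i hpj]

theorem exists_pos_hasPeriod (w : List α) : ∃ p, 0 < p ∧ w.HasPeriod p :=
  ⟨w.length + 1, by omega, w.hasPeriod_of_length_le _ (by omega)⟩

open Classical in
noncomputable def minPeriod (w : List α) : ℕ := Nat.find w.exists_pos_hasPeriod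

open Classical in
theorem minPeriod_pos_and_hasPeriod (w : List α) : 0 < w.minPeriod ∧ w.HasPeriod w.minPeriod :=
  Nat.find_spec w.exists_pos_hasPeriod

open Classical in
theorem not_hasPeriod_of_lt_minPeriod {j : ℕ} (hj : 0 < j) (hjp : j < w.minPeriod) :
    ¬ w.HasPeriod j :=
  fun h => Nat.find_min w.exists_pos_hasPeriod hjp ⟨hj, h⟩

theorem minPeriod_dvd_of_hasPeriod {j : ℕ} (hj : w.HasPeriod j)
    (hjk : w.minPeriod + j ≤ w.length) : w.minPeriod ∣ j := by
  obtain ⟨hp0, hp⟩ := w.minPeriod_pos_and_hasPeriod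
  have hg : w.HasPeriod (w.minPeriod.gcd j) := hp.gcd hj (by omega)
  have hle : w.minPeriod.gcd j ≤ w.minPeriod := Nat.gcd_le_left j hp0
  have : w.minPeriod.gcd j = w.minPeriod := by
    by_contra hne
    exact not_hasPeriod_of_lt_minPeriod (Nat.gcd_pos_of_pos_left j hp0) (by omega) hg
  exact this ▸ Nat.gcd_dvd_right _ j

theorem minPeriod_le_length (hw : w ≠ []) : w.minPeriod ≤ w.length := by
  classical
  exact Nat.find_min' _ ⟨List.length_pos_iff.2 hw, w.hasPeriod_of_length_le _ le_rfl⟩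

end List

theorem norm_sum_range_mul_pow_le {t : ℂ} (ht : ‖t‖ < 1) {d : ℕ → ℂ} {m : ℕ}
    (hd : ∀ j, ‖d j‖ ≤ 1) (hdm : ∀ j < m, d j = 0) (n : ℕ) :
    ‖∑ j ∈ range n, d j * t ^ j‖ ≤ ‖t‖ ^ m / (1 - ‖t‖) :=
  calc ‖∑ j ∈ range n, d j * t ^ j‖ ≤ ∑ j ∈ range (max n m), ‖d j * t ^ j‖ :=
        (norm_sum_le _ _).trans <| sum_le_sum_of_subset_of_nonneg
          (range_subset_range.2 (le_max_left n m)) fun _ _ _ => norm_nonneg _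
    _ = ∑ j ∈ Ico m (max n m), ‖d j * t ^ j‖ := by
        rw [← sum_range_add_sum_Ico _ (le_max_right n m),
          sum_eq_zero fun j hj => by simp [hdm j (mem_range.1 hj)], zero_add]
    _ ≤ ∑ j ∈ Ico m (max n m), ‖t‖ ^ j := sum_le_sum fun j _ => by
        rw [norm_mul, norm_pow]; exact mul_le_of_le_one_left (by positivity) (hd j)
    _ ≤ ‖t‖ ^ m / (1 - ‖t‖) := geom_sum_Ico_le_of_lt_one (norm_nonneg t) ht

theorem sum_range_ite_dvd {M : Type*} [AddCommMonoid M] (f : ℕ → M) {p : ℕ} (hp : 0 < p)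
    (n : ℕ) : ∑ j ∈ range n, (if p ∣ j then f j else 0)
      = ∑ l ∈ range ((n + p - 1) / p), f (p * l) := by
  rw [← sum_filter, ← sum_image fun a _ b _ h => Nat.eq_of_mul_eq_mul_left hp h]
  congr 1
  ext j
  simp only [mem_filter, mem_range, mem_image, Nat.lt_div_iff_mul_lt hp]
  constructor
  · rintro ⟨hj, l, rfl⟩
    exact ⟨l, by rw [mul_comm]; omega, rfl⟩
  · rintro ⟨l, hl, rfl⟩
    exact ⟨by rw [mul_comm]; omega, dvd_mul_right p l⟩

theorem one_sub_norm_pow_le_norm_sum_range_ite_dvd {t : ℂ} (ht : ‖t‖ ≤ 1) {p : ℕ} (hp : 0 < p)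
    (n : ℕ) : 1 - ‖t‖ ^ n ≤ ‖∑ j ∈ range n, (if p ∣ j then t ^ j else 0)‖ * (1 + ‖t‖ ^ p) := by
  set m := (n + p - 1) / p
  have hm : n ≤ p * m := by
    have h₁ : p * m + (n + p - 1) % p = n + p - 1 := Nat.div_add_mod _ _
    have h₂ := Nat.mod_lt (n + p - 1) hp
    omega
  have hgeom : (∑ j ∈ range n, (if p ∣ j then t ^ j else 0)) * (t ^ p - 1) = t ^ (p * m) - 1 := by
    simp_rw [sum_range_ite_dvd _ hp, pow_mul, geom_sum_mul]; rfl
  calc 1 - ‖t‖ ^ n ≤ 1 - ‖t‖ ^ (p * m) :=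
        sub_le_sub_left (pow_le_pow_of_le_one (norm_nonneg t) ht hm) 1
    _ ≤ ‖t ^ (p * m) - 1‖ := by
        rw [norm_sub_rev, ← norm_pow]; simpa using norm_sub_norm_le 1 (t ^ (p * m))
    _ = ‖∑ j ∈ range n, (if p ∣ j then t ^ j else 0)‖ * ‖t ^ p - 1‖ := by rw [← hgeom, norm_mul]
    _ ≤ ‖∑ j ∈ range n, (if p ∣ j then t ^ j else 0)‖ * (1 + ‖t‖ ^ p) := by
        gcongr; simpa [add_comm] using norm_sub_le (t ^ p) 1

theorem eq_of_sub_mul_eval_eq_neg_one {A : ℂ[X]} {c : ℂ} {S : Set ℂ} (hS : Convex ℝ S)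
    {X M : ℝ} (hX : 0 < X) (hM : M < X ^ 2) (hA : ∀ z ∈ S, X ≤ ‖A.eval z‖)
    (hA' : ∀ z ∈ S, ‖A.derivative.eval z‖ ≤ M) {z₁ z₂ : ℂ} (hz₁ : z₁ ∈ S) (hz₂ : z₂ ∈ S)
    (h₁ : (z₁ - c) * A.eval z₁ = -1) (h₂ : (z₂ - c) * A.eval z₂ = -1) : z₁ = z₂ := by
  have hlip : ‖A.eval z₂ - A.eval z₁‖ ≤ M * ‖z₂ - z₁‖ :=
    hS.norm_image_sub_le_of_norm_deriv_le (fun _ _ => A.differentiableAt)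
      (fun z hz => (A.deriv (x := z)).symm ▸ hA' z hz) hz₁ hz₂
  have hc : ‖z₂ - c‖ * ‖A.eval z₂‖ = 1 := by rw [← norm_mul, h₂, norm_neg, norm_one]
  have hkey : ‖z₂ - z₁‖ * ‖A.eval z₁‖ = ‖z₂ - c‖ * ‖A.eval z₂ - A.eval z₁‖ := by
    rw [← norm_mul, ← norm_mul, ← norm_neg]
    congr 1
    linear_combination h₁ - h₂
  have hle : ‖z₂ - z₁‖ * X ^ 2 ≤ ‖z₂ - z₁‖ * M :=
    calc ‖z₂ - z₁‖ * X ^ 2 ≤ ‖z₂ - z₁‖ * ‖A.eval z₁‖ * ‖A.eval z₂‖ := by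
          rw [sq, ← mul_assoc]; gcongr <;> [exact hA z₁ hz₁; exact hA z₂ hz₂]
      _ = ‖A.eval z₂ - A.eval z₁‖ * (‖z₂ - c‖ * ‖A.eval z₂‖) := by rw [hkey]; ring
      _ ≤ ‖z₂ - z₁‖ * M := by rw [hc, mul_one, mul_comm]; exact hlip
  by_contra hne
  have hpos : 0 < ‖z₂ - z₁‖ := norm_pos_iff.2 (sub_ne_zero.2 (Ne.symm hne))
  exact (le_of_mul_le_mul_left hle hpos).not_gt hM

theorem eval_add_sub_mul_derivative_ne_zero {A : ℂ[X]} {c z : ℂ}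
    (h : (z - c) * A.eval z = -1) (hA : ‖A.derivative.eval z‖ < ‖A.eval z‖ ^ 2) :
    A.eval z + (z - c) * A.derivative.eval z ≠ 0 := by
  intro h0
  have : A.eval z ^ 2 = A.derivative.eval z := by
    linear_combination A.eval z * h0 - A.derivative.eval z * h
  rw [← this, norm_pow] at hA
  exact lt_irrefl _ hA

theorem sum_range_mul_pow_sub_one_le {s : ℝ} (hs : 1 < s) (k : ℕ) :
    ∑ i ∈ range k, (i : ℝ) * s ^ (i - 1) ≤ (k - 1 : ℕ) * s ^ (k - 1) / (s - 1) := by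
  rcases k with _ | n
  · simp
  calc ∑ i ∈ range (n + 1), (i : ℝ) * s ^ (i - 1) = ∑ i ∈ range n, ((i : ℝ) + 1) * s ^ i := by
        simp [sum_range_succ']
    _ ≤ ∑ i ∈ range n, (n : ℝ) * s ^ i := sum_le_sum fun i hi => by
        gcongr; exact_mod_cast mem_range.1 hi
    _ = n * ((s ^ n - 1) / (s - 1)) := by rw [← mul_sum, geom_sum_eq hs.ne']
    _ ≤ (n + 1 - 1 : ℕ) * s ^ (n + 1 - 1) / (s - 1) := by
        rw [Nat.add_sub_cancel, mul_div_assoc]; gcongr; linarith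

theorem nat_lt_mul_pow {n : ℕ} (hn : 8 ≤ n) : (n : ℝ) < 0.2304 * 1.038 * 1.87 ^ n := by
  induction n, hn using Nat.le_induction with
  | base => norm_num
  | succ n hn ih =>
    have : (8 : ℝ) ≤ n := by exact_mod_cast hn
    push_cast
    rw [pow_succ]
    nlinarith

theorem nat_mul_pow_div_lt_sq {q n : ℕ} (hq : 2 ≤ q) (hn : 8 ≤ n) :
    n * ((q : ℝ) + 0.038) ^ n / ((q : ℝ) + 0.038 - 1) < (0.48 * ((q : ℝ) - 0.038) ^ n) ^ 2 := by
  have hq' : (2 : ℝ) ≤ q := by exact_mod_cast hq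
  set s : ℝ := q + 0.038
  set r : ℝ := q - 0.038
  have hs : 0 < s := by positivity
  have hgrowth : 1.87 * s ≤ r ^ 2 := by
    simp only [s, r]; nlinarith
  calc (n : ℝ) * s ^ n / (s - 1) ≤ n * s ^ n / 1.038 := by
        gcongr; simp only [s]; linarith
    _ < 0.2304 * (1.87 ^ n * s ^ n) := by
        rw [div_lt_iff₀ (by norm_num)]
        have := nat_lt_mul_pow hn
        nlinarith [pow_pos hs n]
    _ ≤ 0.2304 * (r ^ 2) ^ n := by
        rw [← mul_pow]; gcongr
    _ = (0.48 * r ^ n) ^ 2 := by rw [mul_pow, ← pow_mul, ← pow_mul, mul_comm n 2]; norm_num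

theorem Nat.sub_one_lt_two_pow_sub_two {k : ℕ} (hk : 4 ≤ k) : k - 1 < 2 ^ (k - 2) := by
  induction k, hk using Nat.le_induction with
  | base => norm_num
  | succ k hk ih =>
    rw [show k + 1 - 2 = k - 2 + 1 by omega, pow_succ]
    omega

theorem pow_sub_le_sub_pow {x ε : ℝ} (hx : 0 < x) (hε : ε ≤ 2 * x) (n : ℕ) :
    x ^ (n + 1) - (n + 1) * ε * x ^ n ≤ (x - ε) ^ (n + 1) := by
  have hbern := one_add_mul_le_pow (a := -(ε / x))
    (by rw [neg_le_neg_iff, div_le_iff₀ hx]; linarith) (n + 1)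
  calc x ^ (n + 1) - (n + 1) * ε * x ^ n
        = x ^ (n + 1) * (1 + ((n + 1 : ℕ) : ℝ) * -(ε / x)) := by field_simp; push_cast; ring
    _ ≤ x ^ (n + 1) * (1 + -(ε / x)) ^ (n + 1) := by gcongr
    _ = (x - ε) ^ (n + 1) := by rw [← mul_pow]; congr 1; field_simp; ring

section Autocorrelation

variable {α : Type*} [DecidableEq α]

theorem acorrBit_le_one (w : List α) (i : ℕ) : acorrBit w i ≤ 1 := by
  unfold acorrBit; split <;> omega

theorem acorrBit_length (w : List α) : acorrBit w w.length = 1 := by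
  simp [acorrBit]

theorem acorrBit_length_sub_eq_one_iff {w : List α} {j : ℕ} (hj : j ≤ w.length) :
    acorrBit w (w.length - j) = 1 ↔ w.HasPeriod j := by
  rw [List.hasPeriod_iff_take_eq_drop, acorrBit, Nat.sub_sub_self hj]
  split <;> simp_all

theorem acorrBit_length_sub_eq_ite {w : List α} {j : ℕ} (hjk : j < w.length)
    (hj : j < w.minPeriod ∨ w.minPeriod + j ≤ w.length) :
    acorrBit w (w.length - j) = if w.minPeriod ∣ j then 1 else 0 := by
  obtain ⟨hp0, hp⟩ := w.minPeriod_pos_and_hasPeriod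
  split_ifs with hdvd
  · exact (acorrBit_length_sub_eq_one_iff hjk.le).2 (hp.of_dvd hdvd)
  · have hper : ¬ w.HasPeriod j := by
      rcases hj with hj | hj
      · exact List.not_hasPeriod_of_lt_minPeriod
          (Nat.pos_of_ne_zero (by rintro rfl; exact hdvd (dvd_zero _))) hj
      · exact fun h => hdvd (List.minPeriod_dvd_of_hasPeriod h hj)
    have := acorrBit_le_one w (w.length - j)
    have := (acorrBit_length_sub_eq_one_iff hjk.le).not.2 hper
    omega

theorem norm_sum_acorrBit_mul_pow_ge (w : List α) (hk : 9 ≤ w.length) {t : ℂ}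
    (ht : ‖t‖ ≤ 20 / 33) :
    0.48 ≤ ‖∑ j ∈ range w.length, (acorrBit w (w.length - j) : ℂ) * t ^ j‖ := by
  set p := w.minPeriod
  set ρ := ‖t‖
  obtain ⟨hp0, -⟩ := w.minPeriod_pos_and_hasPeriod
  have hpk : p ≤ w.length := List.minPeriod_le_length (List.ne_nil_of_length_pos (by omega))
  set m₀ := max p (w.length - p + 1)
  set G := ∑ j ∈ range w.length, (if p ∣ j then t ^ j else 0)
  set d : ℕ → ℂ := fun j => (acorrBit w (w.length - j) : ℂ) - if p ∣ j then 1 else 0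
  have hsplit : ∑ j ∈ range w.length, (acorrBit w (w.length - j) : ℂ) * t ^ j
      = G + ∑ j ∈ range w.length, d j * t ^ j := by
    rw [← sum_add_distrib]
    refine sum_congr rfl fun j _ => ?_
    simp only [d]
    split_ifs <;> ring
  have hd : ∀ j, ‖d j‖ ≤ 1 := fun j => by
    simp only [d]
    rcases Nat.le_one_iff_eq_zero_or_eq_one.1 (acorrBit_le_one w (w.length - j)) with h | h <;>
      split_ifs <;> simp [h]
  have hdm : ∀ j < m₀, d j = 0 := fun j hj => by
    simp only [d, acorrBit_length_sub_eq_ite (w := w) (j := j) (by omega) (by omega)]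
    split_ifs <;> simp
  have hρ : 0 ≤ ρ := norm_nonneg t
  have hG := one_sub_norm_pow_le_norm_sum_range_ite_dvd (ht.trans (by norm_num)) hp0 w.length
  have hR := norm_sum_range_mul_pow_le (ht.trans_lt (by norm_num)) hd hdm w.length
  have hpow {e n : ℕ} (he : e ≤ n) : ρ ^ n ≤ (20 / 33) ^ e :=
    (pow_le_pow_of_le_one hρ (ht.trans (by norm_num)) he).trans (pow_le_pow_left₀ hρ ht e)
  -- A small least period leaves a tail of order `≥ 6`; a large one makes `t ^ p` small.
  obtain ⟨a, b, ha, hb, hab⟩ : ∃ a b : ℝ, ρ ^ p ≤ a ∧ ρ ^ m₀ ≤ b ∧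
      0.48 + b * (33 / 13) ≤ (1 - (20 / 33) ^ 9) / (1 + a) := by
    rcases le_or_gt p 4 with hp4 | hp5
    · exact ⟨_, _, (hpow hp0).trans_eq (pow_one _), hpow (le_max_of_le_right (by omega) :
        6 ≤ m₀), by norm_num⟩
    · exact ⟨_, _, hpow hp5, hpow (le_max_of_le_left hp5 : 5 ≤ m₀), by norm_num⟩
  have hGa : (1 - (20 / 33) ^ 9) / (1 + a) ≤ ‖G‖ := by
    rw [div_le_iff₀ (by linarith [pow_nonneg hρ p])]
    nlinarith [norm_nonneg G, hpow (n := w.length) hk]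
  have hRb : ‖∑ j ∈ range w.length, d j * t ^ j‖ ≤ b * (33 / 13) :=
    hR.trans <| by rw [div_le_iff₀ (by linarith)]; nlinarith [pow_nonneg hρ m₀]
  calc (0.48 : ℝ) ≤ ‖G‖ - ‖∑ j ∈ range w.length, d j * t ^ j‖ := by linarith
    _ ≤ _ := by rw [hsplit]; simpa using norm_sub_norm_le G (-∑ j ∈ range w.length, d j * t ^ j)

theorem APolyC_eval (w : List α) (z : ℂ) :
    (APolyC w).eval z = ∑ i ∈ range w.length, (acorrBit w (i + 1) : ℂ) * z ^ i := by
  simp [APolyC, eval_finsetSum]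

theorem APolyC_eval_eq_pow_mul_sum (w : List α) {z : ℂ} (hz : z ≠ 0) :
    (APolyC w).eval z
      = z ^ (w.length - 1) * ∑ j ∈ range w.length, (acorrBit w (w.length - j) : ℂ) * z⁻¹ ^ j := by
  rw [APolyC_eval, ← sum_range_reflect, mul_sum]
  refine sum_congr rfl fun j hj => ?_
  have hj := mem_range.1 hj
  rw [show w.length - 1 - j + 1 = w.length - j by omega, mul_left_comm, inv_pow,
    ← pow_sub₀ z hz (by omega)]

theorem norm_APolyC_eval_ge (w : List α) (hk : 9 ≤ w.length) {z : ℂ} (hz : 1.65 ≤ ‖z‖) :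
    0.48 * ‖z‖ ^ (w.length - 1) ≤ ‖(APolyC w).eval z‖ := by
  have hz0 : z ≠ 0 := norm_pos_iff.1 (by linarith)
  have ht : ‖z⁻¹‖ ≤ 20 / 33 := by
    rw [norm_inv, inv_le_comm₀ (by linarith) (by norm_num)]; linarith
  rw [APolyC_eval_eq_pow_mul_sum w hz0, norm_mul, norm_pow, mul_comm]
  exact mul_le_mul_of_nonneg_left (norm_sum_acorrBit_mul_pow_ge w hk ht) (by positivity)

end Autocorrelation

section Degree

variable {α : Type*} [DecidableEq α] (q : ℕ) {w : List α}

theorem APolyC_natDegree_le : (APolyC w).natDegree ≤ w.length - 1 :=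
  natDegree_sum_le_of_forall_le _ _ fun i hi =>
    (natDegree_C_mul_X_pow_le _ i).trans (by have := mem_range.1 hi; omega)

theorem APolyC_coeff_length_sub_one (hk : 0 < w.length) : (APolyC w).coeff (w.length - 1) = 1 := by
  simp [APolyC, Nat.sub_add_cancel hk, acorrBit_length, hk]

theorem APolyC_monic (hk : 0 < w.length) : (APolyC w).Monic :=
  monic_of_natDegree_le_of_coeff_eq_one _ APolyC_natDegree_le (APolyC_coeff_length_sub_one hk)

theorem APolyC_natDegree (hk : 0 < w.length) : (APolyC w).natDegree = w.length - 1 :=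
  natDegree_eq_of_le_of_coeff_ne_zero APolyC_natDegree_le
    (by rw [APolyC_coeff_length_sub_one hk]; exact one_ne_zero)

theorem PPolyC_natDegree (hk : 0 < w.length) : (PPolyC q w).natDegree = w.length := by
  have h : ((X - C (q : ℂ)) * APolyC w).natDegree = w.length := by
    rw [(monic_X_sub_C _).natDegree_mul (APolyC_monic hk), natDegree_X_sub_C, APolyC_natDegree hk]
    omega
  rw [PPolyC, natDegree_add_eq_right_of_natDegree_lt (by rw [h, natDegree_one]; exact hk), h]

end Degree

section Recurrence

variable {α : Type*} [DecidableEq α] (q : ℕ) (w : List α)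

theorem PPolyC_eval (z : ℂ) : (PPolyC q w).eval z = 1 + (z - q) * (APolyC w).eval z := by
  simp [PPolyC]

variable {q w}

theorem sub_mul_APolyC_eval_of_isRoot {z : ℂ} (hz : (PPolyC q w).IsRoot z) :
    (z - q) * (APolyC w).eval z = -1 := by
  rw [IsRoot, PPolyC_eval] at hz
  linear_combination hz

theorem norm_sub_le_of_isRoot_PPolyC (hk : 9 ≤ w.length) {z : ℂ} (hz : (PPolyC q w).IsRoot z)
    (hz' : 1.65 ≤ ‖z‖) : ‖z - q‖ ≤ 0.038 := by
  have h₁ : ‖z - q‖ * ‖(APolyC w).eval z‖ = 1 := by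
    rw [← norm_mul, sub_mul_APolyC_eval_of_isRoot hz, norm_neg, norm_one]
  have h₂ : (1.65 : ℝ) ^ 8 ≤ ‖z‖ ^ (w.length - 1) :=
    (pow_le_pow_right₀ (by norm_num) (by omega)).trans (pow_le_pow_left₀ (by norm_num) hz' _)
  have h₃ := norm_APolyC_eval_ge w hk hz'
  -- `0.48 * 1.65 ^ 8 > 1 / 0.038`
  nlinarith [norm_nonneg (z - q)]

theorem norm_APolyC_eval_ge_of_mem_closedBall (hq : 2 ≤ q) (hk : 9 ≤ w.length) {z : ℂ}
    (hz : z ∈ Metric.closedBall (q : ℂ) 0.038) :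
    0.48 * ((q : ℝ) - 0.038) ^ (w.length - 1) ≤ ‖(APolyC w).eval z‖ := by
  have hq' : (2 : ℝ) ≤ q := by exact_mod_cast hq
  have hz' : (q : ℝ) - 0.038 ≤ ‖z‖ := by
    have := norm_sub_norm_le (q : ℂ) z
    rw [Complex.norm_natCast, norm_sub_rev] at this
    linarith [mem_closedBall_iff_norm.1 hz]
  refine le_trans ?_ (norm_APolyC_eval_ge w hk (by linarith))
  gcongr
  linarith

theorem norm_derivative_APolyC_eval_le {s : ℝ} (hs : 1 < s) {z : ℂ} (hz : ‖z‖ ≤ s) :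
    ‖(APolyC w).derivative.eval z‖ ≤ (w.length - 1 : ℕ) * s ^ (w.length - 1) / (s - 1) := by
  have hterm (i : ℕ) : ‖(acorrBit w (i + 1) * i : ℂ) * z ^ (i - 1)‖ ≤ i * s ^ (i - 1) := by
    rw [norm_mul, norm_mul, norm_pow, Complex.norm_natCast, Complex.norm_natCast]
    have : (acorrBit w (i + 1) : ℝ) ≤ 1 := by exact_mod_cast acorrBit_le_one w (i + 1)
    gcongr
    calc (acorrBit w (i + 1) : ℝ) * i ≤ 1 * i := by gcongr
      _ = i := one_mul _
  calc ‖(APolyC w).derivative.eval z‖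
      ≤ ∑ i ∈ range w.length, ‖(acorrBit w (i + 1) * i : ℂ) * z ^ (i - 1)‖ := by
        simp only [APolyC, derivative_sum, derivative_C_mul_X_pow, eval_finsetSum, eval_mul,
          eval_C, eval_pow, eval_X]
        exact norm_sum_le _ _
    _ ≤ ∑ i ∈ range w.length, (i : ℝ) * s ^ (i - 1) := sum_le_sum fun i _ => hterm i
    _ ≤ _ := sum_range_mul_pow_sub_one_le hs _

theorem eq_of_isRoot_PPolyC (hq : 2 ≤ q) (hk : 9 ≤ w.length) {z₁ z₂ : ℂ}
    (h₁ : (PPolyC q w).IsRoot z₁) (h₂ : (PPolyC q w).IsRoot z₂) (hz₁ : 1.65 ≤ ‖z₁‖)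
    (hz₂ : 1.65 ≤ ‖z₂‖) : z₁ = z₂ := by
  have hq' : (2 : ℝ) ≤ q := by exact_mod_cast hq
  refine eq_of_sub_mul_eval_eq_neg_one (convex_closedBall (q : ℂ) 0.038)
    (mul_pos (by norm_num) (pow_pos (by linarith) _))
    (nat_mul_pow_div_lt_sq hq (by omega))
    (fun z hz => norm_APolyC_eval_ge_of_mem_closedBall hq hk hz)
    (fun z hz => norm_derivative_APolyC_eval_le (by linarith) ?_)
    (mem_closedBall_iff_norm.2 (norm_sub_le_of_isRoot_PPolyC hk h₁ hz₁))
    (mem_closedBall_iff_norm.2 (norm_sub_le_of_isRoot_PPolyC hk h₂ hz₂))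
    (sub_mul_APolyC_eval_of_isRoot h₁) (sub_mul_APolyC_eval_of_isRoot h₂)
  simpa using norm_le_of_mem_closedBall hz

theorem rootMultiplicity_PPolyC_eq_one (hq : 2 ≤ q) (hk : 9 ≤ w.length) {z : ℂ}
    (hz : (PPolyC q w).IsRoot z) (hz' : 1.65 ≤ ‖z‖) : (PPolyC q w).rootMultiplicity z = 1 := by
  have hq' : (2 : ℝ) ≤ q := by exact_mod_cast hq
  have hball := mem_closedBall_iff_norm.2 (norm_sub_le_of_isRoot_PPolyC hk hz hz')
  have hA' : ‖(APolyC w).derivative.eval z‖ < ‖(APolyC w).eval z‖ ^ 2 := by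
    refine (norm_derivative_APolyC_eval_le (s := q + 0.038) (by linarith)
      (by simpa using norm_le_of_mem_closedBall hball)).trans_lt <|
      (nat_mul_pow_div_lt_sq hq (by omega)).trans_le ?_
    have := norm_APolyC_eval_ge_of_mem_closedBall hq hk hball
    gcongr
    exact mul_nonneg (by norm_num) (pow_nonneg (by linarith) _)
  have hder : ¬ (PPolyC q w).derivative.IsRoot z := by
    simpa [PPolyC, IsRoot] using
      eval_add_sub_mul_derivative_ne_zero (sub_mul_APolyC_eval_of_isRoot hz) hA'
  have hP : PPolyC q w ≠ 0 := fun h => by simp [h] at hder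
  have h₁ := (rootMultiplicity_pos hP).2 hz
  have h₂ := (one_lt_rootMultiplicity_iff_isRoot hP).not.2 (fun h => hder h.2)
  omega

end Recurrence

section Real

variable {α : Type*} [DecidableEq α] {q : ℕ} {w : List α}

theorem PPolyR_map : (PPolyR q w).map (algebraMap ℝ ℂ) = PPolyC q w := by
  unfold PPolyR PPolyC APolyR APolyC
  simp [Polynomial.map_sum]

theorem PPolyC_eval_ofReal (x : ℝ) :
    (PPolyC q w).eval (x : ℂ) = (((PPolyR q w).eval x : ℝ) : ℂ) := by
  rw [← PPolyR_map, eval_map_algebraMap]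
  exact aeval_algebraMap_apply_eq_algebraMap_eval x _

theorem pow_le_APolyR_eval (hk : 0 < w.length) {x : ℝ} (hx : 0 ≤ x) :
    x ^ (w.length - 1) ≤ (APolyR w).eval x := by
  simp only [APolyR, eval_finsetSum, eval_mul, eval_C, eval_pow, eval_X]
  refine le_trans ?_ (single_le_sum (f := fun i => (acorrBit w (i + 1) : ℝ) * x ^ i)
    (fun i _ => by positivity) (mem_range.2 (Nat.sub_lt hk one_pos)))
  rw [Nat.sub_add_cancel (Nat.one_le_of_lt hk), acorrBit_length, Nat.cast_one, one_mul]

theorem exists_isRoot_PPolyR_mem_Ioo (hq : 2 ≤ q) (hk : 4 ≤ w.length) :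
    ∃ x ∈ Set.Ioo ((q : ℝ) - ((q : ℝ) ^ (w.length - 2))⁻¹) q, (PPolyR q w).IsRoot x := by
  have hq' : (2 : ℝ) ≤ q := by exact_mod_cast hq
  obtain ⟨n, hn⟩ : ∃ n, w.length = n + 2 := ⟨w.length - 2, by omega⟩
  rw [hn, Nat.add_sub_cancel]
  set ε := ((q : ℝ) ^ n)⁻¹
  have hqn : (2 : ℝ) ^ n ≤ q ^ n := pow_le_pow_left₀ (by norm_num) hq' n
  have hεq : ε * q ^ n = 1 := inv_mul_cancel₀ (by positivity)
  have hε : 0 < ε := by positivity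
  have hnε : (n + 1) * ε < 1 := by
    have : ((n + 1 : ℕ) : ℝ) < 2 ^ n := by
      exact_mod_cast (show n + 2 - 1 < 2 ^ (n + 2 - 2) from hn ▸ Nat.sub_one_lt_two_pow_sub_two hk)
    push_cast at this
    calc (n + 1) * ε < q ^ n * ε := mul_lt_mul_of_pos_right (this.trans_le hqn) hε
      _ = 1 := by rw [mul_comm, hεq]
  have hε2 : ε ≤ 2 * q := by nlinarith
  have hlow : (PPolyR q w).eval (q - ε) < 0 := by
    have hA := pow_le_APolyR_eval (w := w) (by omega) (x := q - ε) (by nlinarith)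
    rw [hn, show n + 2 - 1 = n + 1 by omega] at hA
    have hbern := pow_sub_le_sub_pow (by positivity : (0 : ℝ) < q) hε2 n
    have h₁ : ε * (q : ℝ) ^ (n + 1) = q := by rw [pow_succ, ← mul_assoc, hεq, one_mul]
    have h₂ : ε * ((n + 1) * ε * (q : ℝ) ^ n) = (n + 1) * ε := by
      linear_combination ((n + 1) * ε) * hεq
    simp only [PPolyR, eval_add, eval_one, eval_mul, eval_sub, eval_X, eval_C, sub_sub_cancel_left]
    nlinarith [mul_le_mul_of_nonneg_left hA hε.le, mul_le_mul_of_nonneg_left hbern hε.le]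
  have hhigh : (PPolyR q w).eval (q : ℝ) = 1 := by simp [PPolyR]
  exact intermediate_value_Ioo (by linarith : (q : ℝ) - ε ≤ q)
    (PPolyR q w).continuous.continuousOn ⟨hlow, by rw [hhigh]; norm_num⟩

end Real

/-- For `q ≥ 2` and a word `w` of length `k ≥ 9`, the recurrence polynomial
`P_w` over `ℂ` has exactly one root of absolute value `≥ 1.65`; this root is real, simple,
lies in `(q − q^{-(k-2)}, q)`, and the remaining `k − 1` roots (with multiplicity) all have
absolute value `< 1.65`. -/
theorem stmt3 (q k : ℕ) (hq : 2 ≤ q) (hk : 9 ≤ k) (w : List (Fin q)) (hwlen : w.length = k) :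
    ∃ αm : ℝ, ((q : ℝ) - (q : ℝ) ^ (-((k : ℤ) - 2)) < αm ∧ αm < q) ∧
      (PPolyC q w).IsRoot (αm : ℂ) ∧
      (1.65 : ℝ) ≤ ‖(αm : ℂ)‖ ∧
      (PPolyC q w).rootMultiplicity (αm : ℂ) = 1 ∧
      (PPolyC q w).roots.card = k ∧
      ∀ β : ℂ, (PPolyC q w).IsRoot β → β ≠ (αm : ℂ) → ‖β‖ < 1.65 := by
  subst hwlen
  have hq' : (2 : ℝ) ≤ q := by exact_mod_cast hq
  obtain ⟨αm, ⟨hlo, hhi⟩, hroot⟩ := exists_isRoot_PPolyR_mem_Ioo hq (by omega : 4 ≤ w.length)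
  have hε : ((q : ℝ) ^ (w.length - 2))⁻¹ ≤ 4⁻¹ :=
    inv_anti₀ (by norm_num) <| calc (4 : ℝ) ≤ (q : ℝ) ^ 2 := by nlinarith
      _ ≤ (q : ℝ) ^ (w.length - 2) := pow_le_pow_right₀ (by linarith) (by omega)
  have hαC : (PPolyC q w).IsRoot αm := by
    rw [IsRoot, PPolyC_eval_ofReal, hroot.eq_zero, Complex.ofReal_zero]
  have hα : (1.65 : ℝ) ≤ ‖(αm : ℂ)‖ := by
    rw [Complex.norm_real, Real.norm_of_nonneg (by linarith)]
    linarith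
  refine ⟨αm, ⟨?_, hhi⟩, hαC, hα, rootMultiplicity_PPolyC_eq_one hq hk hαC hα, ?_,
    fun β hβ hne => ?_⟩
  · rwa [show -((w.length : ℤ) - 2) = -((w.length - 2 : ℕ) : ℤ) by omega, zpow_neg, zpow_natCast]
  · rw [IsAlgClosed.card_roots_eq_natDegree, PPolyC_natDegree q (by omega)]
  · by_contra! h
    exact hne (eq_of_isRoot_PPolyC hq hk hβ hαC h hα)
end

section
/- For every integer q ≥ 2, every integer k ≥ 3, and every word w of length k over an alphabet of q letters, one has P_w(q) = 1 and P_w(q − q^{-(k-2)}) ≤ 0; consequently P_w has a real root in the interval [q − q^{-(k-2)}, q). -/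
/-!
Since `b_k = 1` and all `b_i ≥ 0`, `A_w(x) ≥ x^(k-1)` for `x ≥ 0`. With `ε = q^(-(k-2))` this gives
`P_w(q - ε) = 1 - ε A_w(q - ε) ≤ 1 - ε (q - ε)^(k-1)`, and Bernoulli's inequality shows
`ε (q - ε)^(k-1) ≥ 1`. As `P_w(q) = 1`, the intermediate value theorem yields the root.
-/

open Polynomial

lemma eval_PPolyR (q : ℕ) {α : Type*} [DecidableEq α] (w : List α) (x : ℝ) :
    (PPolyR q w).eval x = 1 + (x - q) * (APolyR w).eval x := by
  simp [PPolyR]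

lemma pow_length_sub_one_le_eval_APolyR {α : Type*} [DecidableEq α] {w : List α} (hw : w ≠ [])
    {x : ℝ} (hx : 0 ≤ x) : x ^ (w.length - 1) ≤ (APolyR w).eval x := by
  have hlen : w.length - 1 + 1 = w.length := Nat.sub_add_cancel (List.length_pos_iff.mpr hw)
  have hlast : (C (acorrBit w (w.length - 1 + 1) : ℝ) * X ^ (w.length - 1)).eval x =
      x ^ (w.length - 1) := by
    simp [hlen, acorrBit]
  have hmem : w.length - 1 ∈ Finset.range w.length := Finset.mem_range.mpr (by omega)
  rw [APolyR, eval_finsetSum, ← hlast]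
  refine Finset.single_le_sum (f := fun i => (C (acorrBit w (i + 1) : ℝ) * X ^ i).eval x)
    (fun i _ => ?_) hmem
  simp only [eval_mul, eval_C, eval_pow, eval_X]
  positivity

lemma pow_le_sub_inv_pow_pow_succ {q : ℝ} (hq : 2 ≤ q) (n : ℕ) :
    q ^ n ≤ (q - (q ^ n)⁻¹) ^ (n + 1) := by
  have hqn : 1 ≤ q ^ n := one_le_pow₀ (by linarith)
  have hcancel : q ^ n * (q ^ n)⁻¹ = 1 := mul_inv_cancel₀ (by positivity)
  have hε : (q ^ n)⁻¹ ≤ 1 := inv_le_one_of_one_le₀ hqn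
  have hbernoulli := pow_add_mul_le_add_pow (a := q) (b := -(q ^ n)⁻¹) (by linarith)
    (by linarith) (n + 1)
  have hn : (n + 1 : ℝ) ≤ q ^ n :=
    calc (n + 1 : ℝ) ≤ 2 ^ n := by exact_mod_cast Nat.lt_two_pow_self
      _ ≤ q ^ n := pow_le_pow_left₀ (by norm_num) hq n
  rw [← sub_eq_add_neg, Nat.add_sub_cancel, mul_neg, mul_assoc, hcancel] at hbernoulli
  push_cast at hbernoulli
  nlinarith [pow_succ q n]

/-- For `q ≥ 2`, `k ≥ 3` and a word `w` of length `k`, one has `P_w(q) = 1`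
and `P_w(q − q^{-(k-2)}) ≤ 0`; consequently `P_w` has a real root in `[q − q^{-(k-2)}, q)`. -/
theorem stmt4 (q k : ℕ) (hq : 2 ≤ q) (hk : 3 ≤ k) (w : List (Fin q)) (hwlen : w.length = k) :
    (PPolyR q w).eval (q : ℝ) = 1 ∧
    (PPolyR q w).eval ((q : ℝ) - (q : ℝ) ^ (-((k : ℤ) - 2))) ≤ 0 ∧
    ∃ x ∈ Set.Ico ((q : ℝ) - (q : ℝ) ^ (-((k : ℤ) - 2))) (q : ℝ), (PPolyR q w).eval x = 0 := by
  obtain ⟨n, rfl⟩ : ∃ n, k = n + 2 := ⟨k - 2, by omega⟩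
  have hq' : (2 : ℝ) ≤ q := by exact_mod_cast hq
  have hε : (q : ℝ) ^ (-((n + 2 : ℕ) - 2 : ℤ)) = ((q : ℝ) ^ n)⁻¹ := by
    rw [← zpow_natCast, ← zpow_neg]; push_cast; ring_nf
  rw [hε]
  set ε := ((q : ℝ) ^ n)⁻¹
  have hε0 : 0 < ε := by positivity
  have hε1 : ε ≤ 1 := inv_le_one_of_one_le₀ (one_le_pow₀ (by linarith))
  have hP_q : (PPolyR q w).eval (q : ℝ) = 1 := by simp [eval_PPolyR]
  have hA : (q - ε) ^ (n + 1) ≤ (APolyR w).eval (q - ε) := by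
    simpa [hwlen] using pow_length_sub_one_le_eval_APolyR (w := w)
      (List.ne_nil_of_length_pos (by omega)) (x := q - ε) (by linarith)
  have hP_sub : (PPolyR q w).eval (q - ε) ≤ 0 := by
    calc (PPolyR q w).eval (q - ε) = 1 - ε * (APolyR w).eval (q - ε) := by
          rw [eval_PPolyR]; ring
      _ ≤ 1 - ε * q ^ n := by
          gcongr; exact (pow_le_sub_inv_pow_pow_succ hq' n).trans hA
      _ = 0 := by rw [inv_mul_cancel₀ (by positivity), sub_self]
  refine ⟨hP_q, hP_sub, ?_⟩
  have hroot := intermediate_value_Ico (by linarith : (q : ℝ) - ε ≤ q)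
    (PPolyR q w).continuous.continuousOn (show (0 : ℝ) ∈ Set.Ico _ _ by
      rw [hP_q]; exact ⟨hP_sub, one_pos⟩)
  simpa using hroot
end

section
/- For every integer q ≥ 2, every integer k ≥ 9, every word w of length k over an alphabet of q letters, and every complex number x with |x| = 1.65, one has |(x − q)·A_w(x)| > 1. -/
open Finset

namespace Autocorrelation

lemma geom_sum_le_pow_div {r : ℝ} (hr : 1 < r) (n : ℕ) :
    ∑ i ∈ range n, r ^ i ≤ r ^ n / (r - 1) := by
  rw [geom_sum_eq hr.ne' n]
  gcongr
  linarith

lemma sum_pow_sub_mul_le {r : ℝ} (hr : 1 < r) {p : ℕ} (hp : 2 ≤ p) (n : ℕ) :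
    ∑ j ∈ Icc 1 (n / p), r ^ (n - j * p) ≤ r ^ n / (r ^ 2 - 1) := by
  have hr0 : r ≠ 0 := by positivity
  have hterm : ∀ j ∈ Icc 1 (n / p), r ^ (n - j * p) ≤ r ^ n * ((r ^ 2)⁻¹) ^ j := by
    intro j hj
    have hjp : j * p ≤ n := (Nat.le_div_iff_mul_le (by omega)).1 (mem_Icc.1 hj).2
    have h2j : 2 * j ≤ j * p := by nlinarith
    calc r ^ (n - j * p) ≤ r ^ (n - 2 * j) := pow_le_pow_right₀ hr.le (by omega)
      _ = r ^ n * ((r ^ 2)⁻¹) ^ j := by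
        rw [pow_sub₀ r hr0 (by omega), pow_mul, inv_pow]
  have hq : (r ^ 2)⁻¹ < 1 := inv_lt_one_of_one_lt₀ (one_lt_pow₀ hr two_ne_zero)
  calc ∑ j ∈ Icc 1 (n / p), r ^ (n - j * p)
      ≤ r ^ n * ∑ j ∈ Ico 1 (n / p + 1), ((r ^ 2)⁻¹) ^ j := by
        rw [Ico_add_one_right_eq_Icc, mul_sum]; exact sum_le_sum hterm
    _ ≤ r ^ n * ((r ^ 2)⁻¹ ^ 1 / (1 - (r ^ 2)⁻¹)) := by
        gcongr; exact geom_sum_Ico_le_of_lt_one (by positivity) hq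
    _ = r ^ n / (r ^ 2 - 1) := by
        have : r ^ 2 - 1 ≠ 0 := by nlinarith
        field_simp

lemma sub_one_div_le_norm_geom_sum {𝕜 : Type*} [NormedDivisionRing 𝕜] (x : 𝕜) (n : ℕ) :
    (‖x‖ ^ n - 1) / (‖x‖ + 1) ≤ ‖∑ i ∈ range n, x ^ i‖ := by
  have h1 : ‖x‖ ^ n - 1 ≤ ‖∑ i ∈ range n, x ^ i‖ * ‖x - 1‖ := by
    rw [← norm_mul, geom_sum_mul]
    simpa using norm_sub_norm_le (x ^ n) 1
  have h2 : ‖x - 1‖ ≤ ‖x‖ + 1 := (norm_sub_le _ _).trans_eq (by simp)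
  rw [div_le_iff₀ (by positivity)]
  exact h1.trans (mul_le_mul_of_nonneg_left h2 (norm_nonneg _))

section Periods

variable {α : Type*} {w : List α}

def HasPeriod (w : List α) (d : ℕ) : Prop :=
  ∀ i, i + d < w.length → w[i]? = w[i + d]?

lemma hasPeriod_of_length_le {d : ℕ} (h : w.length ≤ d) : HasPeriod w d :=
  fun _ hi => absurd hi (by omega)

lemma HasPeriod.mul {p : ℕ} (hp : HasPeriod w p) (n : ℕ) : HasPeriod w (n * p) := by
  induction n with
  | zero => intro i _; simp
  | succ n ih =>
    intro i hi
    rw [Nat.succ_mul] at hi ⊢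
    rw [ih i (by omega), ← add_assoc]
    exact hp _ (by omega)

lemma HasPeriod.sub {p d : ℕ} (hp : HasPeriod w p) (hd : HasPeriod w d) (hpd : p ≤ d)
    (hlen : p + d ≤ w.length) : HasPeriod w (d - p) := by
  intro i hi
  by_cases hc : i + d < w.length
  · rw [hd i hc, hp (i + (d - p)) (by omega), show i + (d - p) + p = i + d by omega]
  · -- here `i ≥ w.length - d ≥ p`, so both positions are reached from `i - p`
    rw [← show i - p + p = i by omega, ← hp (i - p) (by omega), hd (i - p) (by omega),
      show i - p + d = i - p + p + (d - p) by omega]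

lemma HasPeriod.dvd_of_minimal {p d : ℕ} (hp : HasPeriod w p) (hp0 : 0 < p)
    (hmin : ∀ d, 0 < d → HasPeriod w d → p ≤ d) (hd : HasPeriod w d)
    (hlen : d + p ≤ w.length) : p ∣ d := by
  induction d using Nat.strong_induction_on with
  | _ d ih =>
    rcases Nat.eq_zero_or_pos d with rfl | hd0
    · exact dvd_zero p
    have hpd := hmin d hd0 hd
    have h := ih (d - p) (by omega) (hp.sub hd hpd (by omega)) (by omega)
    simpa [Nat.sub_add_cancel hpd] using Nat.dvd_add h (dvd_refl p)

lemma exists_minimal_period (w : List α) :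
    ∃ p, 0 < p ∧ HasPeriod w p ∧ ∀ d, 0 < d → HasPeriod w d → p ≤ d := by
  classical
  have hex : ∃ p, 0 < p ∧ HasPeriod w p :=
    ⟨w.length + 1, by omega, hasPeriod_of_length_le (by omega)⟩
  exact ⟨Nat.find hex, (Nat.find_spec hex).1, (Nat.find_spec hex).2,
    fun d hd hpd => Nat.find_min' hex ⟨hd, hpd⟩⟩

lemma take_eq_drop_iff_hasPeriod {d : ℕ} :
    w.take (w.length - d) = w.drop d ↔ HasPeriod w d := by
  constructor
  · intro h i hi
    have e := congrArg (fun l => l[i]?) h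
    simp only [List.getElem?_take, List.getElem?_drop] at e
    rw [if_pos (by omega)] at e
    rw [e, add_comm]
  · intro h
    refine List.ext_getElem? fun i => ?_
    rw [List.getElem?_take, List.getElem?_drop]
    split_ifs with hi
    · rw [h i (by omega), add_comm]
    · exact (List.getElem?_eq_none (by omega)).symm

end Periods

section Correlation

variable {α : Type*} [DecidableEq α] {w : List α}

lemma acorrBit_eq_one_iff {i : ℕ} (hi : i ≤ w.length) :
    acorrBit w i = 1 ↔ HasPeriod w (w.length - i) := by
  rw [← take_eq_drop_iff_hasPeriod, Nat.sub_sub_self hi]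
  unfold acorrBit
  split_ifs with h <;> simp [h]

lemma acorrBit_eq_one_cases {p i : ℕ} (hp0 : 0 < p) (hp : HasPeriod w p)
    (hmin : ∀ d, 0 < d → HasPeriod w d → p ≤ d) (hi : i + 1 < w.length)
    (hb : acorrBit w (i + 1) = 1) :
    2 * i + 3 ≤ w.length ∨ ∃ j, 0 < j ∧ i + j * p = w.length - 1 := by
  have hd := (acorrBit_eq_one_iff hi.le).1 hb
  have hpd := hmin _ (by omega) hd
  by_cases hlen : w.length - (i + 1) + p ≤ w.length
  · obtain ⟨j, hj⟩ := hp.dvd_of_minimal hp0 hmin hd hlen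
    refine Or.inr ⟨j, Nat.pos_of_ne_zero ?_, by rw [mul_comm]; omega⟩
    rintro rfl
    omega
  · exact Or.inl (by omega)

lemma eval_APolyC (w : List α) (x : ℂ) :
    (APolyC w).eval x = ∑ i ∈ range w.length, (acorrBit w (i + 1) : ℂ) * x ^ i := by
  simp [APolyC, Polynomial.eval_finsetSum]

lemma eval_APolyC_of_hasPeriod_one (h : HasPeriod w 1) (x : ℂ) :
    (APolyC w).eval x = ∑ i ∈ range w.length, x ^ i := by
  rw [eval_APolyC]
  refine sum_congr rfl fun i hi => ?_
  have hi := mem_range.1 hi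
  rw [(acorrBit_eq_one_iff (by omega)).2 (by simpa using h.mul (w.length - (i + 1)))]
  simp

lemma norm_eval_APolyC_ge (hw : w ≠ []) (x : ℂ) :
    ‖x‖ ^ (w.length - 1) - ∑ i ∈ range (w.length - 1), (acorrBit w (i + 1) : ℝ) * ‖x‖ ^ i ≤
      ‖(APolyC w).eval x‖ := by
  have hlen : w.length - 1 + 1 = w.length := Nat.succ_pred_eq_of_pos (List.length_pos_iff.2 hw)
  have hlead : acorrBit w w.length = 1 := by simp [acorrBit]
  rw [eval_APolyC, ← hlen, sum_range_succ, hlen, hlead, Nat.cast_one, one_mul]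
  set S := ∑ i ∈ range (w.length - 1), (acorrBit w (i + 1) : ℂ) * x ^ i
  have hS : ‖S‖ ≤ ∑ i ∈ range (w.length - 1), (acorrBit w (i + 1) : ℝ) * ‖x‖ ^ i :=
    (norm_sum_le _ _).trans_eq (sum_congr rfl fun i _ => by simp)
  have h := norm_sub_norm_le (x ^ (w.length - 1)) (-S)
  rw [norm_pow, norm_neg, sub_neg_eq_add, add_comm] at h
  linarith

lemma sum_acorrBit_mul_pow_le {p : ℕ} (hp2 : 2 ≤ p) (hp : HasPeriod w p)
    (hmin : ∀ d, 0 < d → HasPeriod w d → p ≤ d) {r : ℝ} (hr : 1 < r) :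
    ∑ i ∈ range (w.length - 1), (acorrBit w (i + 1) : ℝ) * r ^ i ≤
      r ^ ((w.length - 1) / 2) / (r - 1) + r ^ (w.length - 1) / (r ^ 2 - 1) := by
  set k := w.length
  have hr0 : ∀ i, 0 ≤ r ^ i := fun i => by positivity
  have hS : (range (k - 1)).filter (fun i => acorrBit w (i + 1) = 1) ⊆
      range ((k - 1) / 2) ∪ (Icc 1 ((k - 1) / p)).image (fun j => k - 1 - j * p) := by
    intro i hi
    obtain ⟨hi, hb⟩ := mem_filter.1 hi
    rcases acorrBit_eq_one_cases (by omega) hp hmin (by simp at hi; omega) hb with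
      h | ⟨j, hj, hij⟩
    · exact mem_union_left _ (mem_range.2 (by omega))
    · refine mem_union_right _ (mem_image.2 ⟨j, mem_Icc.2 ⟨hj, ?_⟩, by omega⟩)
      exact (Nat.le_div_iff_mul_le (by omega)).2 (by omega)
  calc ∑ i ∈ range (k - 1), (acorrBit w (i + 1) : ℝ) * r ^ i
      = ∑ i ∈ (range (k - 1)).filter (fun i => acorrBit w (i + 1) = 1), r ^ i := by
        rw [sum_filter]
        refine sum_congr rfl fun i _ => ?_
        unfold acorrBit
        split_ifs <;> simp_all
    _ ≤ ∑ i ∈ range ((k - 1) / 2) ∪ (Icc 1 ((k - 1) / p)).image (fun j => k - 1 - j * p),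
          r ^ i := sum_le_sum_of_subset_of_nonneg hS fun i _ _ => hr0 i
    _ ≤ ∑ i ∈ range ((k - 1) / 2), r ^ i +
          ∑ i ∈ (Icc 1 ((k - 1) / p)).image (fun j => k - 1 - j * p), r ^ i := by
        rw [← sum_union_inter]
        exact le_add_of_nonneg_right (sum_nonneg fun i _ => hr0 i)
    _ ≤ ∑ i ∈ range ((k - 1) / 2), r ^ i + ∑ j ∈ Icc 1 ((k - 1) / p), r ^ (k - 1 - j * p) := by
        gcongr
        exact sum_image_le_of_nonneg fun i _ => hr0 i
    _ ≤ _ := add_le_add (geom_sum_le_pow_div hr _) (sum_pow_sub_mul_le hr hp2 _)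

lemma le_norm_eval_APolyC (hk : 9 ≤ w.length) {x : ℂ} (hx : ‖x‖ = 1.65) :
    2.9 ≤ ‖(APolyC w).eval x‖ := by
  obtain ⟨p, hp0, hp, hmin⟩ := exists_minimal_period w
  rcases (show p = 1 ∨ 2 ≤ p by omega) with rfl | hp2
  · rw [eval_APolyC_of_hasPeriod_one hp]
    refine le_trans ?_ (sub_one_div_le_norm_geom_sum x _)
    have hpow : (1.65 : ℝ) ^ 9 ≤ 1.65 ^ w.length := pow_le_pow_right₀ (by norm_num) hk
    rw [hx, le_div_iff₀ (by norm_num)]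
    norm_num at hpow ⊢
    linarith
  · have hw : w ≠ [] := by rintro rfl; simp at hk
    refine le_trans ?_ (norm_eval_APolyC_ge hw x)
    have hsum := sum_acorrBit_mul_pow_le hp2 hp hmin (r := ‖x‖) (by rw [hx]; norm_num)
    rw [hx] at hsum ⊢
    set t := (1.65 : ℝ) ^ (w.length - 5)
    have hlead : (1.65 : ℝ) ^ (w.length - 1) = t * 1.65 ^ 4 := by
      rw [← pow_add]; congr 1; omega
    have hlow : (1.65 : ℝ) ^ ((w.length - 1) / 2) ≤ t :=
      pow_le_pow_right₀ (by norm_num) (by omega)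
    have ht : (1.65 : ℝ) ^ 4 ≤ t := pow_le_pow_right₀ (by norm_num) (by omega)
    rw [hlead] at hsum ⊢
    norm_num at hsum ⊢
    nlinarith

end Correlation

end Autocorrelation

open Autocorrelation in
/-- For `q ≥ 2`, a word `w` of length `k ≥ 9`, and any complex `x` with
`|x| = 1.65`, one has `|(x − q)·A_w(x)| > 1`. -/
theorem stmt5 (q k : ℕ) (hq : 2 ≤ q) (hk : 9 ≤ k) (w : List (Fin q)) (hwlen : w.length = k) :
    ∀ x : ℂ, ‖x‖ = 1.65 →
      1 < ‖(x - (q : ℂ)) * (APolyC w).eval x‖ := by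
  intro x hx
  have hxq : 0.35 ≤ ‖x - q‖ := by
    have h := norm_sub_norm_le (q : ℂ) x
    rw [norm_sub_rev, Complex.norm_natCast, hx] at h
    have : (2 : ℝ) ≤ q := by exact_mod_cast hq
    linarith
  have hA := le_norm_eval_APolyC (hwlen ▸ hk) hx
  rw [norm_mul]
  nlinarith
end

section
/- Let q ≥ 2, let w be a word of length k over an alphabet of q letters, let α be a complex root of the recurrence polynomial P_w with |α| ≤ 2 and multiplicity m, and let Q be the polynomial Q(x) = P_w(x)/(x − α)^m. Then for every natural number l, the l-th derivative of Q satisfies |Q^{(l)}(α)| ≤ q·e²·k!. -/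
open Polynomial Nat

section HasseDerivBound

variable {R : Type*} [NormedRing R] [NormOneClass R]

theorem factorial_mul_norm_coeff_hasseDeriv_le {P : R[X]} {k : ℕ} {C : ℝ}
    (hdeg : P.natDegree ≤ k) (hC : ∀ j, ‖P.coeff j‖ ≤ C) (n i : ℕ) :
    n ! * ‖(hasseDeriv n P).coeff i‖ ≤ C * (k ! / i !) := by
  rw [hasseDeriv_coeff]
  by_cases hik : i + n ≤ k
  · have hfact : ((i + n).choose n * n ! : ℝ) ≤ k ! / i ! := by
      rw [le_div_iff₀ (by positivity)]
      have hchoose := Nat.choose_mul_factorial_mul_factorial (Nat.le_add_left n i)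
      rw [Nat.add_sub_cancel] at hchoose
      exact_mod_cast hchoose ▸ Nat.factorial_le hik
    calc n ! * ‖((i + n).choose n : R) * P.coeff (i + n)‖
        ≤ n ! * ((i + n).choose n * ‖P.coeff (i + n)‖) := by
          gcongr
          exact (norm_mul_le _ _).trans (by gcongr; simpa using Nat.norm_cast_le (α := R) _)
      _ = ((i + n).choose n * n !) * ‖P.coeff (i + n)‖ := by ring
      _ ≤ (k ! / i !) * C := by gcongr; exact hC _
      _ = C * (k ! / i !) := mul_comm _ _
  · rw [coeff_eq_zero_of_natDegree_lt (by omega), mul_zero, norm_zero, mul_zero]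
    exact mul_nonneg ((norm_nonneg _).trans (hC 0)) (by positivity)

theorem factorial_mul_norm_hasseDeriv_eval_le {P : R[X]} {k : ℕ} {C r : ℝ} {a : R}
    (hdeg : P.natDegree ≤ k) (hC : ∀ j, ‖P.coeff j‖ ≤ C) (ha : ‖a‖ ≤ r) (n : ℕ) :
    n ! * ‖(hasseDeriv n P).eval a‖ ≤ C * Real.exp r * k ! := by
  have hdeg' : (hasseDeriv n P).natDegree < k + 1 :=
    Nat.lt_succ_of_le ((natDegree_hasseDeriv_le P n).trans (Nat.sub_le_of_le_add (by omega)))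
  rw [eval_eq_sum_range' hdeg']
  have hC0 : 0 ≤ C := (norm_nonneg _).trans (hC 0)
  calc n ! * ‖∑ i ∈ Finset.range (k + 1), (hasseDeriv n P).coeff i * a ^ i‖
      ≤ n ! * ∑ i ∈ Finset.range (k + 1), ‖(hasseDeriv n P).coeff i‖ * ‖a‖ ^ i := by
        gcongr
        refine (norm_sum_le _ _).trans (Finset.sum_le_sum fun i _ => ?_)
        exact (norm_mul_le _ _).trans (by gcongr; exact norm_pow_le _ _)
    _ ≤ ∑ i ∈ Finset.range (k + 1), C * (k ! / i !) * r ^ i := by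
        rw [Finset.mul_sum]
        refine Finset.sum_le_sum fun i _ => ?_
        rw [← mul_assoc]
        exact mul_le_mul (factorial_mul_norm_coeff_hasseDeriv_le hdeg hC n i)
          (pow_le_pow_left₀ (norm_nonneg _) ha i) (by positivity) (by positivity)
    _ = C * k ! * ∑ i ∈ Finset.range (k + 1), r ^ i / i ! := by
        rw [Finset.mul_sum]
        exact Finset.sum_congr rfl fun i _ => by ring
    _ ≤ C * k ! * Real.exp r := by
        gcongr
        exact Real.sum_le_exp_of_nonneg ((norm_nonneg _).trans ha) _
    _ = C * Real.exp r * k ! := by ring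

end HasseDerivBound

theorem iterate_derivative_eval_eq_of_eq_X_sub_C_pow_mul {R : Type*} [CommRing R]
    {P Q : R[X]} {a : R} {m : ℕ} (h : P = (X - C a) ^ m * Q) (l : ℕ) :
    (derivative^[l] Q).eval a = l ! * (hasseDeriv (l + m) P).eval a := by
  have htaylor : taylor a P = X ^ m * taylor a Q := by
    simp [h, taylor_apply, mul_comp]
  rw [← factorial_smul_hasseDeriv, LinearMap.smul_apply, eval_smul, nsmul_eq_mul, ← taylor_coeff,
    ← taylor_coeff, htaylor, coeff_X_pow_mul]

section RecurrencePolynomial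

variable {β : Type*} [DecidableEq β] (w : List β)

theorem coeff_APolyC (i : ℕ) :
    (APolyC w).coeff i = if i < w.length then (acorrBit w (i + 1) : ℂ) else 0 := by
  simp only [APolyC, finsetSum_coeff, coeff_C_mul, coeff_X_pow, mul_ite, mul_one, mul_zero,
    Finset.sum_ite_eq, Finset.mem_range]

theorem coeff_APolyC_eq_zero_or_one (i : ℕ) :
    (APolyC w).coeff i = 0 ∨ (APolyC w).coeff i = 1 := by
  rw [coeff_APolyC]
  split
  · unfold acorrBit
    split <;> simp
  · exact Or.inl rfl

theorem coeff_PPolyC (q i : ℕ) :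
    (PPolyC q w).coeff i =
      (if i = 0 then 1 else (APolyC w).coeff (i - 1)) - q * (APolyC w).coeff i := by
  rw [PPolyC, coeff_add, sub_mul, coeff_sub, coeff_C_mul, coeff_one]
  cases i with
  | zero => simp [sub_eq_add_neg]
  | succ j => simp [coeff_X_mul]

theorem natDegree_PPolyC_le (q : ℕ) : (PPolyC q w).natDegree ≤ w.length := by
  rw [natDegree_le_iff_coeff_eq_zero]
  intro i hi
  simp only [coeff_PPolyC, coeff_APolyC, if_neg (show ¬i < w.length by omega),
    if_neg (show ¬i - 1 < w.length by omega), if_neg (show i ≠ 0 by omega), mul_zero, sub_zero]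

theorem norm_coeff_PPolyC_le {q : ℕ} (hq : 1 ≤ q) (i : ℕ) : ‖(PPolyC q w).coeff i‖ ≤ q := by
  have hq' : (1 : ℝ) ≤ q := by exact_mod_cast hq
  have hshift : (if i = 0 then (1 : ℂ) else (APolyC w).coeff (i - 1)) = 0 ∨
      (if i = 0 then (1 : ℂ) else (APolyC w).coeff (i - 1)) = 1 := by
    split
    · exact Or.inr rfl
    · exact coeff_APolyC_eq_zero_or_one w _
  rw [coeff_PPolyC]
  rcases hshift with h | h <;> rcases coeff_APolyC_eq_zero_or_one w i with h' | h' <;>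
    simp only [h, h', mul_zero, mul_one, sub_zero, zero_sub, norm_neg, norm_zero, norm_one,
      Complex.norm_natCast] <;> try linarith
  rw [show (1 : ℂ) - q = ((1 - q : ℝ) : ℂ) by push_cast; ring, Complex.norm_real,
    Real.norm_eq_abs, abs_of_nonpos (by linarith)]
  linarith

end RecurrencePolynomial

theorem stmt7_general (q k : ℕ) (hq : 2 ≤ q) (w : List (Fin q)) (hwlen : w.length = k)
    (α : ℂ) (habs : ‖α‖ ≤ 2)
    (Q : Polynomial ℂ)
    (hQ : PPolyC q w =
      (Polynomial.X - Polynomial.C α) ^ ((PPolyC q w).rootMultiplicity α) * Q) :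
    ∀ l : ℕ, ‖(Polynomial.derivative^[l] Q).eval α‖ ≤
      (q : ℝ) * Real.exp 2 * (Nat.factorial k) := by
  intro l
  set m := (PPolyC q w).rootMultiplicity α
  have hdeg : (PPolyC q w).natDegree ≤ k := hwlen ▸ natDegree_PPolyC_le w q
  rw [iterate_derivative_eval_eq_of_eq_X_sub_C_pow_mul hQ l, norm_mul, Complex.norm_natCast]
  calc (l ! : ℝ) * ‖(hasseDeriv (l + m) (PPolyC q w)).eval α‖
      ≤ (l + m) ! * ‖(hasseDeriv (l + m) (PPolyC q w)).eval α‖ := by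
        gcongr
        exact Nat.le_add_right l m
    _ ≤ q * Real.exp 2 * k ! :=
        factorial_mul_norm_hasseDeriv_eval_le hdeg (norm_coeff_PPolyC_le w (by omega)) habs _

/-- Let `α` be a root of `P_w` with `|α| ≤ 2` and multiplicity `m`, and let
`Q(x) = P_w(x)/(x − α)^m`. Then for every `l`, `|Q^{(l)}(α)| ≤ q·e²·k!`. -/
theorem stmt7 (q k : ℕ) (hq : 2 ≤ q) (w : List (Fin q)) (hwlen : w.length = k)
    (α : ℂ) (hroot : (PPolyC q w).IsRoot α) (habs : ‖α‖ ≤ 2)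
    (Q : Polynomial ℂ)
    (hQ : PPolyC q w =
      (Polynomial.X - Polynomial.C α) ^ ((PPolyC q w).rootMultiplicity α) * Q) :
    ∀ l : ℕ, ‖(Polynomial.derivative^[l] Q).eval α‖ ≤
      (q : ℝ) * Real.exp 2 * (Nat.factorial k) :=
  stmt7_general q k hq w hwlen α habs Q hQ
end

section
/- There exist a constant C > 0 and an integer k₀ such that for every integer q ≥ 2, every integer k ≥ k₀, and every word w of length k over an alphabet of q letters, the unique real root α_m of the recurrence polynomial P_w in the interval (q − q^{-(k-2)}, q) satisfies |(q − α_m) − 1/A_w(q) − A_w'(q)/A_w(q)³| ≤ C·k²·q^{-3k+5}, where A_w' denotes the derivative of A_w; the constant C does not depend on k, q, or the autocorrelation of w. -/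
/-!
Put `e = q - α_m`, `S = A_w(q)` and `D = A_w'(q)`. The root equation reads `e · A_w(q - e) = 1`.
Since `A_w` has coefficients in `{0, 1}` and degree `< k`, Bernoulli's inequality applied
monomial by monomial gives `A_w(q - e) = S - e D + R` with `0 ≤ R ≤ (k e / q)² S`, and also
`q D ≤ k S`. Solving the root equation for `e` then gives `e = 1/S + D/S³ + O(e³ k² / q²)`, and
`e < q^{-(k-2)}` turns the error into `O(k² q^{-3k+5})`.
-/

open Polynomial

lemma one_sub_pow_le {t : ℝ} (ht0 : 0 ≤ t) (ht1 : t ≤ 1) (n : ℕ) :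
    (1 - t) ^ n ≤ 1 - n * t + (n * t) ^ 2 := by
  induction n with
  | zero => simp
  | succ n ih =>
    calc (1 - t) ^ (n + 1) = (1 - t) * (1 - t) ^ n := pow_succ' _ _
      _ ≤ (1 - t) * (1 - n * t + (n * t) ^ 2) := by gcongr
      _ ≤ 1 - (n + 1 : ℕ) * t + ((n + 1 : ℕ) * t) ^ 2 := by
        push_cast
        nlinarith [mul_nonneg (mul_nonneg (sq_nonneg (n * t : ℝ)) ht0) ht0, sq_nonneg t]

namespace Polynomial

variable {p : ℝ[X]} {n : ℕ} {x e : ℝ}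

lemma eval_eq_sum_support (p : ℝ[X]) (x : ℝ) :
    p.eval x = ∑ i ∈ p.support, p.coeff i * x ^ i := by
  rw [eval_eq_sum, sum_def]

lemma derivative_eval_eq_sum_support (p : ℝ[X]) (x : ℝ) :
    p.derivative.eval x = ∑ i ∈ p.support, p.coeff i * (i * x ^ (i - 1)) := by
  simp only [derivative_eval, sum_def, mul_assoc]

lemma lt_of_mem_support_of_degree_lt {i : ℕ} (hdeg : p.degree < n) (hi : i ∈ p.support) :
    i < n :=
  WithBot.coe_lt_coe.mp ((le_degree_of_mem_supp i hi).trans_lt hdeg)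

lemma eval_sub_sub_taylor_eq (p : ℝ[X]) (hx : x ≠ 0) (e : ℝ) :
    p.eval (x - e) - (p.eval x - e * p.derivative.eval x) =
      ∑ i ∈ p.support, p.coeff i * x ^ i * ((1 - e / x) ^ i - (1 - i * (e / x))) := by
  rw [eval_eq_sum_support, eval_eq_sum_support, derivative_eval_eq_sum_support, Finset.mul_sum,
    ← Finset.sum_sub_distrib, ← Finset.sum_sub_distrib]
  refine Finset.sum_congr rfl fun i _ => ?_
  have hxe : x - e = x * (1 - e / x) := by field_simp
  rcases i with _ | i
  · simp
  · rw [hxe, mul_pow, pow_succ x i]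
    push_cast
    field_simp

section CoeffNonneg

variable (hp : ∀ i, 0 ≤ p.coeff i)
include hp

lemma derivative_eval_nonneg (hx : 0 ≤ x) : 0 ≤ p.derivative.eval x := by
  rw [derivative_eval_eq_sum_support]
  exact Finset.sum_nonneg fun i _ => by have := hp i; positivity

lemma eval_le_eval_of_le {y : ℝ} (hy : 0 ≤ y) (hyx : y ≤ x) : p.eval y ≤ p.eval x := by
  rw [eval_eq_sum_support, eval_eq_sum_support]
  exact Finset.sum_le_sum fun i _ => by gcongr; exact hp i

lemma mul_derivative_eval_le (hdeg : p.degree < n) (hx : 0 ≤ x) :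
    x * p.derivative.eval x ≤ n * p.eval x := by
  rw [derivative_eval_eq_sum_support, eval_eq_sum_support, Finset.mul_sum, Finset.mul_sum]
  refine Finset.sum_le_sum fun i hi => ?_
  have hin : (i : ℝ) ≤ n := by exact_mod_cast (lt_of_mem_support_of_degree_lt hdeg hi).le
  have hxi : x * (i * x ^ (i - 1)) = i * x ^ i := by
    rcases i with _ | i
    · simp
    · rw [pow_succ']; push_cast; ring
  calc x * (p.coeff i * (i * x ^ (i - 1))) = p.coeff i * x ^ i * i := by
        linear_combination p.coeff i * hxi
    _ ≤ p.coeff i * x ^ i * n := by have := hp i; gcongr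
    _ = n * (p.coeff i * x ^ i) := by ring

lemma eval_sub_taylor_le_eval_sub (hx : 0 < x) (hex : e ≤ 2 * x) :
    p.eval x - e * p.derivative.eval x ≤ p.eval (x - e) := by
  rw [← sub_nonneg, eval_sub_sub_taylor_eq p hx.ne']
  refine Finset.sum_nonneg fun i _ => ?_
  have hbern : 1 + i * (-(e / x)) ≤ (1 + -(e / x)) ^ i :=
    one_add_mul_le_pow (by rw [neg_le_neg_iff, div_le_iff₀ hx]; linarith) i
  rw [← sub_eq_add_neg, mul_neg, ← sub_eq_add_neg] at hbern
  have := hp i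
  have : 0 ≤ (1 - e / x) ^ i - (1 - i * (e / x)) := by linarith
  positivity

lemma eval_sub_le_taylor (hdeg : p.degree < n) (hx : 0 < x) (he0 : 0 ≤ e) (hex : e ≤ x) :
    p.eval (x - e) ≤ p.eval x - e * p.derivative.eval x + (n * e / x) ^ 2 * p.eval x := by
  rw [← sub_le_iff_le_add', eval_sub_sub_taylor_eq p hx.ne', eval_eq_sum_support, Finset.mul_sum]
  refine Finset.sum_le_sum fun i hi => ?_
  have ht0 : 0 ≤ e / x := div_nonneg he0 hx.le
  have hin : (i : ℝ) ≤ n := by exact_mod_cast (lt_of_mem_support_of_degree_lt hdeg hi).le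
  have hsq : (i * (e / x)) ^ 2 ≤ (n * e / x) ^ 2 := by
    rw [mul_div_assoc]; gcongr
  have := one_sub_pow_le ht0 ((div_le_one hx).mpr hex) i
  have := hp i
  calc p.coeff i * x ^ i * ((1 - e / x) ^ i - (1 - i * (e / x)))
      ≤ p.coeff i * x ^ i * (n * e / x) ^ 2 := by gcongr; linarith
    _ = (n * e / x) ^ 2 * (p.coeff i * x ^ i) := by ring

end CoeffNonneg

end Polynomial

lemma abs_sub_one_div_sub_div_pow_three_le {x k e S B D : ℝ} (hx : 0 < x) (hk : 0 ≤ k)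
    (he : 0 < e) (hke : k * e ≤ x) (heB : e * B = 1) (hBS : B ≤ S) (hD : 0 ≤ D)
    (hDS : x * D ≤ k * S) (hlow : S - e * D ≤ B) (hup : B ≤ S - e * D + (k * e / x) ^ 2 * S) :
    |e - 1 / S - D / S ^ 3| ≤ 3 * e ^ 3 * k ^ 2 / x ^ 2 := by
  have hB : 0 < B := pos_of_mul_pos_right (heB ▸ one_pos) he.le
  have hS : 0 < S := hB.trans_le hBS
  set R := B - S + e * D with hR
  set u := e - 1 / S with hu
  have hke1 : k * e / x ≤ 1 := (div_le_one hx).mpr hke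
  have hR0 : 0 ≤ R := by linarith
  have hRS : R ≤ e * (k * S / x) := by
    have : (k * e / x) ^ 2 * S ≤ (k * e / x) * S := by
      gcongr; exact pow_le_of_le_one (by positivity) hke1 two_ne_zero
    calc R ≤ (k * e / x) * S := by linarith
      _ = e * (k * S / x) := by ring
  have hDS' : D ≤ k * S / x := by rw [le_div_iff₀ hx]; linarith
  have hu_eq : u = e * (e * D - R) / S := by
    rw [hu, hR]; field_simp; linear_combination heB
  have hu_le : |u| ≤ e ^ 2 * k / x := by
    have : |e * D - R| ≤ e * (k * S / x) :=
      abs_sub_le_of_nonneg_of_le (by positivity) (by gcongr) hR0 hRS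
    rw [hu_eq, abs_div, abs_mul, abs_of_pos he, abs_of_pos hS, div_le_iff₀ hS]
    calc e * |e * D - R| ≤ e * (e * (k * S / x)) := by gcongr
      _ = e ^ 2 * k / x * S := by ring
  have hSe : 1 / S ≤ e := by
    rw [div_le_iff₀ hS]; nlinarith
  have hsplit : e - 1 / S - D / S ^ 3 = D / S * u * (e + 1 / S) - e * R / S := by
    rw [hu, hR]; field_simp; linear_combination S ^ 2 * heB
  have hDS'' : D / S ≤ k / x := by
    rw [div_le_div_iff₀ hS hx]; linarith
  have hfirst : |D / S * u * (e + 1 / S)| ≤ k / x * (e ^ 2 * k / x) * (2 * e) := by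
    rw [abs_mul, abs_mul, abs_of_nonneg (by positivity : 0 ≤ D / S),
      abs_of_pos (by positivity : 0 < e + 1 / S)]
    gcongr
    linarith
  have hsecond : |e * R / S| ≤ e * (k * e / x) ^ 2 := by
    rw [abs_of_nonneg (by positivity), div_le_iff₀ hS, mul_assoc]
    gcongr
    linarith
  calc |e - 1 / S - D / S ^ 3| ≤ |D / S * u * (e + 1 / S)| + |e * R / S| := by
        rw [hsplit]; exact abs_sub _ _
    _ ≤ k / x * (e ^ 2 * k / x) * (2 * e) + e * (k * e / x) ^ 2 := add_le_add hfirst hsecond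
    _ = 3 * e ^ 3 * k ^ 2 / x ^ 2 := by ring

section Autocorrelation

variable {α : Type*} [DecidableEq α] (w : List α)

lemma coeff_APolyR (i : ℕ) :
    (APolyR w).coeff i = if i < w.length then (acorrBit w (i + 1) : ℝ) else 0 := by
  simp [APolyR]

lemma coeff_APolyR_nonneg (i : ℕ) : 0 ≤ (APolyR w).coeff i := by
  rw [coeff_APolyR]; split_ifs <;> positivity

lemma degree_APolyR_lt : (APolyR w).degree < w.length :=
  (degree_lt_iff_coeff_zero _ _).mpr fun i hi => by rw [coeff_APolyR, if_neg (by omega)]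

lemma isRoot_PPolyR_iff (q : ℕ) (x : ℝ) :
    (PPolyR q w).IsRoot x ↔ (q - x) * (APolyR w).eval x = 1 := by
  simp only [PPolyR, IsRoot, eval_add, eval_one, eval_mul, eval_sub, eval_X, eval_C]
  constructor <;> intro h <;> linarith

end Autocorrelation

section RootWindow

variable {x e : ℝ} {k : ℕ}

lemma natCast_le_zpow_sub_one (hx : 2 ≤ x) (k : ℕ) : (k : ℝ) ≤ x ^ ((k : ℤ) - 1) := by
  rcases k with _ | k
  · simp only [CharP.cast_eq_zero]; positivity
  · calc ((k + 1 : ℕ) : ℝ) ≤ 2 ^ k := by exact_mod_cast Nat.lt_two_pow_self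
      _ ≤ x ^ k := by gcongr
      _ = x ^ (((k + 1 : ℕ) : ℤ) - 1) := by push_cast; simp

lemma natCast_mul_le_of_le_zpow (hx : 2 ≤ x) (he0 : 0 ≤ e) (he : e ≤ x ^ (-((k : ℤ) - 2))) :
    k * e ≤ x :=
  calc (k : ℝ) * e ≤ x ^ ((k : ℤ) - 1) * x ^ (-((k : ℤ) - 2)) := by
        gcongr; exact natCast_le_zpow_sub_one hx k
    _ = x := by rw [← zpow_add₀ (by positivity)]; ring_nf; exact zpow_one x

lemma pow_three_le_zpow_mul_sq (hx : 1 ≤ x) (he0 : 0 ≤ e) (he : e ≤ x ^ (-((k : ℤ) - 2))) :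
    e ^ 3 ≤ x ^ (-3 * (k : ℤ) + 5) * x ^ 2 :=
  calc e ^ 3 ≤ (x ^ (-((k : ℤ) - 2))) ^ 3 := by gcongr
    _ = x ^ (-3 * (k : ℤ) + 6) := by rw [← zpow_natCast, ← zpow_mul]; ring_nf
    _ ≤ x ^ (-3 * (k : ℤ) + 7) := zpow_le_zpow_right₀ hx (by omega)
    _ = x ^ (-3 * (k : ℤ) + 5) * x ^ 2 := by
      rw [← zpow_natCast, ← zpow_add₀ (by positivity)]; ring_nf

end RootWindow

/-- There are `C > 0` and `k₀` such that for all `q ≥ 2`, `k ≥ k₀` and words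
`w` of length `k`, the real root `α_m` of `P_w` in `(q − q^{-(k-2)}, q)` satisfies
`|(q − α_m) − 1/A_w(q) − A_w'(q)/A_w(q)³| ≤ C·k²·q^(−3k+5)`. -/
theorem stmt9 :
    ∃ C : ℝ, 0 < C ∧ ∃ k₀ : ℕ, ∀ (q k : ℕ), 2 ≤ q → k₀ ≤ k →
      ∀ w : List (Fin q), w.length = k →
        ∀ αm : ℝ, αm ∈ Set.Ioo ((q : ℝ) - (q : ℝ) ^ (-((k : ℤ) - 2))) (q : ℝ) →
          (PPolyR q w).IsRoot αm →
          |((q : ℝ) - αm) - 1 / (APolyR w).eval (q : ℝ) -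
              ((APolyR w).derivative.eval (q : ℝ)) / ((APolyR w).eval (q : ℝ)) ^ 3| ≤
            C * (k : ℝ) ^ 2 * (q : ℝ) ^ (-3 * (k : ℤ) + 5) := by
  refine ⟨3, by norm_num, 1, fun q k hq hk w hw αm hα hroot => ?_⟩
  have hq2 : (2 : ℝ) ≤ q := by exact_mod_cast hq
  have hq0 : (0 : ℝ) < q := by linarith
  set e := (q : ℝ) - αm
  have he0 : 0 < e := sub_pos.mpr hα.2
  have heη : e ≤ (q : ℝ) ^ (-((k : ℤ) - 2)) := by linarith [hα.1]
  have hke : (k : ℝ) * e ≤ q := natCast_mul_le_of_le_zpow hq2 he0.le heη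
  have hek : e ≤ q := (le_mul_of_one_le_left he0.le (by exact_mod_cast hk)).trans hke
  have hA := coeff_APolyR_nonneg w
  have hdeg : (APolyR w).degree < k := hw ▸ degree_APolyR_lt w
  have hroot' : e * (APolyR w).eval (q - e) = 1 := by
    rw [sub_sub_cancel]; exact (isRoot_PPolyR_iff w q αm).mp hroot
  have key := abs_sub_one_div_sub_div_pow_three_le hq0 k.cast_nonneg he0 hke hroot'
    (eval_le_eval_of_le hA (by linarith) (by linarith))
    (derivative_eval_nonneg hA hq0.le)
    (mul_derivative_eval_le hA hdeg hq0.le)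
    (eval_sub_taylor_le_eval_sub hA hq0 (by linarith))
    (eval_sub_le_taylor hA hdeg hq0 he0.le hek)
  have he3 := pow_three_le_zpow_mul_sq (by linarith) he0.le heη
  refine key.trans ?_
  rw [div_le_iff₀ (by positivity)]
  linarith [mul_le_mul_of_nonneg_left he3 (sq_nonneg (k : ℝ))]
end

section
/- There exist a constant C > 0 and an integer k₀ such that for every integer q ≥ 2, every integer k ≥ k₀, and every word w of length k over an alphabet of q letters, with α_m the unique real root of P_w in (q − q^{-(k-2)}, q), the derivative of the recurrence polynomial at α_m (which equals 1/c_w, where c_w is the partial fraction coefficient of 1/(x − α_m) in 1/P_w(x)) satisfies |P_w'(α_m) − A_w(q) + 2(q − α_m)·A_w'(q)| ≤ C·k²·q^{-k+2}; the constant C does not depend on k, q, or the autocorrelation of w. -/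
open Polynomial Finset in
lemma pow_sub_pow_le' {a b : ℝ} (ha : 0 ≤ a) (hab : a ≤ b) (n : ℕ) :
    b ^ n - a ^ n ≤ n * b ^ (n - 1) * (b - a) := by
  have hb : 0 ≤ b := ha.trans hab
  rw [← geom_sum₂_mul]
  have hsum : (∑ i ∈ range n, b ^ i * a ^ (n - 1 - i)) ≤ n * b ^ (n - 1) := by
    calc (∑ i ∈ range n, b ^ i * a ^ (n - 1 - i))
        ≤ ∑ i ∈ range n, b ^ (n - 1) := by
          apply sum_le_sum
          intro i hi
          have hi' : i ≤ n - 1 := Nat.le_pred_of_lt (mem_range.mp hi)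
          calc b ^ i * a ^ (n - 1 - i) ≤ b ^ i * b ^ (n - 1 - i) := by
                have := pow_le_pow_left₀ ha hab (n - 1 - i)
                exact mul_le_mul_of_nonneg_left this (pow_nonneg hb i)
            _ = b ^ (n - 1) := by rw [← pow_add, Nat.add_sub_cancel' hi']
      _ = n * b ^ (n - 1) := by simp [nsmul_eq_mul]
  exact mul_le_mul_of_nonneg_right hsum (sub_nonneg.mpr hab)

open Polynomial Finset in
lemma le_pow_sub_pow' {a b : ℝ} (ha : 0 ≤ a) (hab : a ≤ b) (n : ℕ) :
    (n : ℝ) * a ^ (n - 1) * (b - a) ≤ b ^ n - a ^ n := by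
  have hb : 0 ≤ b := ha.trans hab
  rw [← geom_sum₂_mul]
  have hsum : (n : ℝ) * a ^ (n - 1) ≤ ∑ i ∈ range n, b ^ i * a ^ (n - 1 - i) := by
    calc (n : ℝ) * a ^ (n - 1) = ∑ _i ∈ range n, a ^ (n - 1) := by simp [nsmul_eq_mul]
      _ ≤ ∑ i ∈ range n, b ^ i * a ^ (n - 1 - i) := by
          apply sum_le_sum
          intro i hi
          have hi' : i ≤ n - 1 := Nat.le_pred_of_lt (mem_range.mp hi)
          calc a ^ (n - 1) = a ^ i * a ^ (n - 1 - i) := by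
                rw [← pow_add, Nat.add_sub_cancel' hi']
            _ ≤ b ^ i * a ^ (n - 1 - i) := by
                exact mul_le_mul_of_nonneg_right (pow_le_pow_left₀ ha hab i)
                  (pow_nonneg ha _)
  exact mul_le_mul_of_nonneg_right hsum (sub_nonneg.mpr hab)

open Polynomial Finset in
lemma key_term {a b : ℝ} (ha : 0 ≤ a) (hab : a ≤ b) (hb : 1 ≤ b) (i : ℕ) :
    |a ^ i - b ^ i - (b - a) * (i * a ^ (i - 1)) + 2 * (b - a) * (i * b ^ (i - 1))|
      ≤ 2 * (b - a) ^ 2 * i ^ 2 * b ^ i / b ^ 2 := by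
  have hb0 : (0:ℝ) < b := lt_of_lt_of_le one_pos hb
  match i with
  | 0 => simp
  | 1 =>
    have h : a ^ 1 - b ^ 1 - (b - a) * (((1:ℕ):ℝ) * a ^ (1 - 1)) +
        2 * (b - a) * (((1:ℕ):ℝ) * b ^ (1 - 1)) = 0 := by norm_num; ring
    rw [h, abs_zero]
    positivity
  | (m + 2) =>
    set i := m + 2 with hi
    have hε : 0 ≤ b - a := sub_nonneg.mpr hab
    have hD : 0 ≤ b ^ (i - 1) - a ^ (i - 1) :=
      sub_nonneg.mpr (pow_le_pow_left₀ ha hab _)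
    -- bracket bounds
    have h1 : b ^ i - a ^ i ≤ (i : ℝ) * b ^ (i - 1) * (b - a) := pow_sub_pow_le' ha hab i
    have h2 : (i : ℝ) * a ^ (i - 1) * (b - a) ≤ b ^ i - a ^ i := le_pow_sub_pow' ha hab i
    have hT : |a ^ i - b ^ i - (b - a) * (i * a ^ (i - 1)) + 2 * (b - a) * (i * b ^ (i - 1))|
        ≤ 2 * (b - a) * i * (b ^ (i - 1) - a ^ (i - 1)) := by
      rw [abs_le]
      constructor <;> nlinarith [mul_nonneg hε (mul_nonneg (Nat.cast_nonneg (α := ℝ) i) hD)]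
    have hD2 : b ^ (i - 1) - a ^ (i - 1) ≤ ((i:ℝ) - 1) * b ^ (i - 2) * (b - a) := by
      have := pow_sub_pow_le' ha hab (i - 1)
      have e1 : ((i - 1 : ℕ) : ℝ) = (i : ℝ) - 1 := by simp [hi]; push_cast; ring
      have e2 : (i - 1) - 1 = i - 2 := by omega
      rwa [e1, e2] at this
    have hbi : b ^ i = b ^ (i - 2) * b ^ 2 := by
      rw [← pow_add, show i - 2 + 2 = i from by omega]
    have hfinal : 2 * (b - a) * i * (((i:ℝ) - 1) * b ^ (i - 2) * (b - a))
        ≤ 2 * (b - a) ^ 2 * i ^ 2 * b ^ i / b ^ 2 := by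
      have hR : 2 * (b - a) ^ 2 * (i:ℝ) ^ 2 * b ^ i / b ^ 2
          = 2 * (b - a) ^ 2 * (i:ℝ) ^ 2 * b ^ (i - 2) := by
        rw [hbi]; field_simp
      rw [hR]
      nlinarith [mul_nonneg (mul_nonneg (sq_nonneg (b - a)) (Nat.cast_nonneg (α := ℝ) i))
        (pow_nonneg hb0.le (i - 2))]
    calc _ ≤ 2 * (b - a) * i * (b ^ (i - 1) - a ^ (i - 1)) := hT
      _ ≤ 2 * (b - a) * i * (((i:ℝ) - 1) * b ^ (i - 2) * (b - a)) := by
          apply mul_le_mul_of_nonneg_left hD2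
          positivity
      _ ≤ _ := hfinal

open Polynomial Finset in
lemma APolyR_eval {α : Type*} [DecidableEq α] (w : List α) (x : ℝ) :
    (APolyR w).eval x = ∑ i ∈ range w.length, (acorrBit w (i + 1) : ℝ) * x ^ i := by
  simp [APolyR, eval_finset_sum]

open Polynomial Finset in
lemma APolyR_deriv_eval {α : Type*} [DecidableEq α] (w : List α) (x : ℝ) :
    (APolyR w).derivative.eval x
      = ∑ i ∈ range w.length, (acorrBit w (i + 1) : ℝ) * ((i : ℝ) * x ^ (i - 1)) := by
  simp [APolyR, derivative_sum, derivative_C_mul, derivative_X_pow, eval_finset_sum, mul_assoc]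

open Polynomial Finset in
lemma PPolyR_deriv_eval (q : ℕ) {α : Type*} [DecidableEq α] (w : List α) (x : ℝ) :
    (PPolyR q w).derivative.eval x
      = (APolyR w).eval x + (x - (q : ℝ)) * (APolyR w).derivative.eval x := by
  simp only [PPolyR, derivative_add, derivative_one, derivative_mul, derivative_sub,
    derivative_X, derivative_C, eval_add, eval_mul, eval_sub, eval_X, eval_C,
    zero_add, sub_zero, one_mul]
  try ring


/-- There are `C > 0` and `k₀` such that for all `q ≥ 2`, `k ≥ k₀` and words
`w` of length `k`, with `α_m` the real root of `P_w` in `(q − q^{-(k-2)}, q)`,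
`|P_w'(α_m) − A_w(q) + 2(q − α_m)·A_w'(q)| ≤ C·k²·q^(−k+2)`. -/
theorem stmt10 :
    ∃ C : ℝ, 0 < C ∧ ∃ k₀ : ℕ, ∀ (q k : ℕ), 2 ≤ q → k₀ ≤ k →
      ∀ w : List (Fin q), w.length = k →
        ∀ αm : ℝ, αm ∈ Set.Ioo ((q : ℝ) - (q : ℝ) ^ (-((k : ℤ) - 2))) (q : ℝ) →
          (PPolyR q w).IsRoot αm →
          |(PPolyR q w).derivative.eval αm - (APolyR w).eval (q : ℝ) +
              2 * ((q : ℝ) - αm) * (APolyR w).derivative.eval (q : ℝ)| ≤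
            C * (k : ℝ) ^ 2 * (q : ℝ) ^ (-(k : ℤ) + 2) := by
  refine ⟨2, by norm_num, 2, ?_⟩
  intro q k hq hk w hw αm hmem _
  obtain ⟨h1, h2⟩ := hmem
  have hq2 : (2:ℝ) ≤ (q:ℝ) := by exact_mod_cast hq
  have hq0 : (0:ℝ) < (q:ℝ) := by linarith
  have hq1 : (1:ℝ) ≤ (q:ℝ) := by linarith
  have hqne : (q:ℝ) ≠ 0 := ne_of_gt hq0
  have hzle1 : (q:ℝ) ^ (-((k:ℤ) - 2)) ≤ 1 := by
    apply zpow_le_one_of_nonpos₀ hq1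
    omega
  have ha0 : 0 ≤ αm := by linarith
  have hab : αm ≤ (q:ℝ) := h2.le
  have hε0 : 0 ≤ (q:ℝ) - αm := by linarith
  have hεlt : (q:ℝ) - αm ≤ (q:ℝ) ^ (-((k:ℤ) - 2)) := by linarith
  have hE : (PPolyR q w).derivative.eval αm - (APolyR w).eval (q:ℝ) +
        2 * ((q:ℝ) - αm) * (APolyR w).derivative.eval (q:ℝ)
      = ∑ i ∈ Finset.range k, (acorrBit w (i + 1) : ℝ) *
          (αm ^ i - (q:ℝ) ^ i - ((q:ℝ) - αm) * ((i:ℝ) * αm ^ (i - 1)) +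
            2 * ((q:ℝ) - αm) * ((i:ℝ) * (q:ℝ) ^ (i - 1))) := by
    simp only [PPolyR_deriv_eval, APolyR_eval, APolyR_deriv_eval, hw, Finset.mul_sum,
      ← Finset.sum_add_distrib, ← Finset.sum_sub_distrib]
    exact Finset.sum_congr rfl fun i _ => by ring
  rw [hE]
  have hgeom : ∑ i ∈ Finset.range k, (q:ℝ) ^ i ≤ (q:ℝ) ^ k := by
    rw [_root_.geom_sum_eq (by linarith : (q:ℝ) ≠ 1) k,
      div_le_iff₀ (by linarith : (0:ℝ) < (q:ℝ) - 1)]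
    nlinarith [mul_nonneg (pow_nonneg hq0.le k) (by linarith : (0:ℝ) ≤ (q:ℝ) - 2)]
  have hfin : 2 * ((q:ℝ) - αm) ^ 2 * (k:ℝ) ^ 2 / (q:ℝ) ^ 2 * (q:ℝ) ^ k
      ≤ 2 * (k:ℝ) ^ 2 * (q:ℝ) ^ (-(k:ℤ) + 2) := by
    set Z := (q:ℝ) ^ (-((k:ℤ) - 2)) with hZ
    have hZ0 : 0 ≤ Z := le_of_lt (zpow_pos hq0 _)
    have hZq : Z * Z * (q:ℝ) ^ k = (q:ℝ) ^ (-(k:ℤ) + 2) * (q:ℝ) ^ 2 := by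
      rw [hZ, ← zpow_natCast (q:ℝ) k, ← zpow_natCast (q:ℝ) 2,
        ← zpow_add₀ hqne, ← zpow_add₀ hqne, ← zpow_add₀ hqne]
      congr 1
      ring
    rw [div_mul_eq_mul_div, div_le_iff₀ (by positivity : (0:ℝ) < (q:ℝ) ^ 2)]
    have hee : ((q:ℝ) - αm) * ((q:ℝ) - αm) ≤ Z * Z :=
      mul_le_mul hεlt hεlt hε0 hZ0
    calc 2 * ((q:ℝ) - αm) ^ 2 * (k:ℝ) ^ 2 * (q:ℝ) ^ k
        ≤ 2 * (Z * Z) * (k:ℝ) ^ 2 * (q:ℝ) ^ k := by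
          have hkq : (0:ℝ) ≤ (k:ℝ) ^ 2 * (q:ℝ) ^ k := by positivity
          nlinarith [sq_nonneg ((q:ℝ) - αm)]
      _ = 2 * (k:ℝ) ^ 2 * (Z * Z * (q:ℝ) ^ k) := by ring
      _ = 2 * (k:ℝ) ^ 2 * ((q:ℝ) ^ (-(k:ℤ) + 2) * (q:ℝ) ^ 2) := by rw [hZq]
      _ = 2 * (k:ℝ) ^ 2 * (q:ℝ) ^ (-(k:ℤ) + 2) * (q:ℝ) ^ 2 := by ring
  calc |∑ i ∈ Finset.range k, (acorrBit w (i + 1) : ℝ) *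
          (αm ^ i - (q:ℝ) ^ i - ((q:ℝ) - αm) * ((i:ℝ) * αm ^ (i - 1)) +
            2 * ((q:ℝ) - αm) * ((i:ℝ) * (q:ℝ) ^ (i - 1)))|
      ≤ ∑ i ∈ Finset.range k, |(acorrBit w (i + 1) : ℝ) *
          (αm ^ i - (q:ℝ) ^ i - ((q:ℝ) - αm) * ((i:ℝ) * αm ^ (i - 1)) +
            2 * ((q:ℝ) - αm) * ((i:ℝ) * (q:ℝ) ^ (i - 1)))| :=
        Finset.abs_sum_le_sum_abs _ _
    _ ≤ ∑ i ∈ Finset.range k, 2 * ((q:ℝ) - αm) ^ 2 * (k:ℝ) ^ 2 * (q:ℝ) ^ i / (q:ℝ) ^ 2 := by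
        apply Finset.sum_le_sum
        intro i hi
        have hc1 : |(acorrBit w (i + 1) : ℝ)| ≤ 1 := by
          unfold acorrBit
          split <;> norm_num
        have step1 : |(acorrBit w (i + 1) : ℝ) *
            (αm ^ i - (q:ℝ) ^ i - ((q:ℝ) - αm) * ((i:ℝ) * αm ^ (i - 1)) +
              2 * ((q:ℝ) - αm) * ((i:ℝ) * (q:ℝ) ^ (i - 1)))|
            ≤ |αm ^ i - (q:ℝ) ^ i - ((q:ℝ) - αm) * ((i:ℝ) * αm ^ (i - 1)) +
              2 * ((q:ℝ) - αm) * ((i:ℝ) * (q:ℝ) ^ (i - 1))| := by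
          rw [abs_mul]
          exact mul_le_of_le_one_left (abs_nonneg _) hc1
        refine step1.trans ((key_term ha0 hab hq1 i).trans ?_)
        gcongr
        exact_mod_cast (Finset.mem_range.mp hi).le
    _ = 2 * ((q:ℝ) - αm) ^ 2 * (k:ℝ) ^ 2 / (q:ℝ) ^ 2 * ∑ i ∈ Finset.range k, (q:ℝ) ^ i := by
        rw [Finset.mul_sum]
        exact Finset.sum_congr rfl fun i _ => by ring
    _ ≤ 2 * ((q:ℝ) - αm) ^ 2 * (k:ℝ) ^ 2 / (q:ℝ) ^ 2 * (q:ℝ) ^ k :=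
        mul_le_mul_of_nonneg_left hgeom (by positivity)
    _ ≤ 2 * (k:ℝ) ^ 2 * (q:ℝ) ^ (-(k:ℤ) + 2) := hfin
end
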